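/- arXiv:2504.16230 — 3 statements merged into one kernel-verified Lean document; each statement's English description precedes it below -/
import Mathlib

section
/- (Projection identity for the efficient influence function of α.) Under the setup and Assumptions A4 and A5, let ε₁ : ℝ^p × ℝ → [0,1] be measurable with ε₁(L*, Y) a version of E[E | σ(L*, Y)] under μ(·|{A = 1, R = 1}), and ω₁ : ℝ^p → [0,1] measurable with ω₁(L*) a version of E[E | σ(L*)] under μ(·|{A = 1, R = 1}). Then, μ-almost surely, E[A·R·E/η₁(L*) | σ(L*, A, Y)] = A·ε₁(L*, Y) and E[A·R·E/η₁(L*) | σ(L*, A)] = A·ω₁(L*); consequently the projection of A·R·E/η₁(L*) onto the space {f ∈ L²(μ) : f is σ(L*, A, Y)-measurable and E[f | σ(L*, A)] = 0} equals A·(ε₁(L*, Y) − ω₁(L*)). -/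
/-!
Write `W = A·R·E/η₁(L*)`. By MAR, inside the integral of any function of `(L*, A, L, Y)` the
indicator `R` may be replaced by its conditional expectation `η(L*, A)`, which cancels `η₁(L*)`
on `{A = 1}`; so integrating `W` against a function of `(X, A)` amounts to integrating `A·E`.
Running the same computation backwards under `μ(·|A = 1, R = 1)`, with the `σ(X)`-measurable
weight `1/η₁`, the version property of `ε₁` (`X = (L*, Y)`) or `ω₁` (`X = L*`) lets one replace
`E` by `ε₁(X)` or `ω₁(X)`. This identifies both conditional expectations, and the projection
statement is the general fact that `W - (E[W | 𝒢₂] - E[W | 𝒢₀])` is orthogonal to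
`{f ∈ L²(𝒢₂) : E[f | 𝒢₀] = 0}` whenever `𝒢₀ ≤ 𝒢₂`.
-/

open MeasureTheory ProbabilityTheory Filter
open scoped ENNReal ProbabilityTheory

lemma abs_mul_mul_div_le_inv {a r e d ε₀ : ℝ} (ha : a = 0 ∨ a = 1) (hr : r = 0 ∨ r = 1)
    (he : |e| ≤ 1) (hε₀ : 0 < ε₀) (hd : ε₀ ≤ d) : |a * r * e / d| ≤ ε₀⁻¹ := by
  rw [abs_div, abs_of_pos (hε₀.trans_le hd), div_le_iff₀ (hε₀.trans_le hd)]
  calc |a * r * e| ≤ 1 := by rcases ha with rfl | rfl <;> rcases hr with rfl | rfl <;> simp [he]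
    _ ≤ ε₀⁻¹ * d := by rw [← div_eq_inv_mul, one_le_div₀ hε₀]; exact hd

lemma abs_mul_sub_le_one {a x y : ℝ} (ha : a = 0 ∨ a = 1) (hx : x ∈ Set.Icc 0 1)
    (hy : y ∈ Set.Icc 0 1) : |a * (x - y)| ≤ 1 := by
  rcases ha with rfl | rfl
  · simp
  · simpa using abs_sub_le_of_nonneg_of_le hx.1 hx.2 hy.1 hy.2

lemma indicator_preimage_one_eq_self {Ω : Type*} {f : Ω → ℝ} (hf : ∀ ω, f ω = 0 ∨ f ω = 1) :
    (f ⁻¹' {1}).indicator (fun _ => 1) = f := by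
  ext ω
  rcases hf ω with h | h <;> simp [h]

section

variable {Ω γ γZ β : Type*} [MeasurableSpace Ω] [MeasurableSpace γ] [MeasurableSpace γZ]
  [MeasurableSpace β] {μ : Measure Ω} {A : Ω → ℝ} {Z : Ω → γZ} {X : Ω → β}

lemma integral_cond_eq_inv_mul_setIntegral (s : Set Ω) (f : Ω → ℝ) :
    ∫ ω, f ω ∂μ[|s] = (μ s).toReal⁻¹ * ∫ ω in s, f ω ∂μ := by
  rw [ProbabilityTheory.cond, integral_smul_measure, ENNReal.toReal_inv, smul_eq_mul]

lemma integral_map_withDensity_ofReal {α : Type*} [MeasurableSpace α] {d : Ω → ℝ}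
    (hd : Measurable d) (hd₀ : 0 ≤ᵐ[μ] d) {Φ : Ω → α} (hΦ : Measurable Φ) {F : α → ℝ}
    (hF : Measurable F) :
    ∫ x, F x ∂(μ.withDensity fun ω => ENNReal.ofReal (d ω)).map Φ
      = ∫ ω, d ω * F (Φ ω) ∂μ := by
  rw [integral_map hΦ.aemeasurable hF.aestronglyMeasurable,
    integral_withDensity_eq_integral_toReal_smul hd.ennreal_ofReal
      (Eventually.of_forall fun _ => ENNReal.ofReal_lt_top)]
  refine integral_congr_ae ?_
  filter_upwards [hd₀] with ω hω
  rw [ENNReal.toReal_ofReal hω, smul_eq_mul]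

lemma map_withDensity_ofReal_prod_apply {G : Ω → γ} (hG : Measurable G) (hZ : Measurable Z)
    {d : Ω → ℝ} (hd : Integrable d μ) (hd₀ : 0 ≤ᵐ[μ] d) {s : Set γ} {t : Set γZ}
    (hs : MeasurableSet s) (ht : MeasurableSet t) :
    (μ.withDensity fun ω => ENNReal.ofReal (d ω)).map (fun ω => (G ω, Z ω)) (s ×ˢ t)
      = ENNReal.ofReal (∫ ω in G ⁻¹' s ∩ Z ⁻¹' t, d ω ∂μ) := by
  rw [Measure.map_apply (hG.prodMk hZ) (hs.prod ht), Set.mk_preimage_prod,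
    withDensity_apply _ ((hG hs).inter (hZ ht)),
    ofReal_integral_eq_lintegral_ofReal hd.restrict (ae_restrict_of_ae hd₀)]

lemma setIntegral_preimage_prodMk_mul_eq (hX : Measurable X) (hA : Measurable A)
    (hA01 : ∀ ω, A ω = 0 ∨ A ω = 1) {B : Set (β × ℝ)} (hB : MeasurableSet B) (f : Ω → ℝ) :
    ∫ ω in (fun ω => (X ω, A ω)) ⁻¹' B, A ω * f ω ∂μ
      = ∫ ω in X ⁻¹' ((fun b => (b, 1)) ⁻¹' B), A ω * f ω ∂μ := by
  rw [← integral_indicator ((hX.prodMk hA) hB),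
    ← integral_indicator (hX (measurable_prodMk_right hB))]
  congr 1; ext ω
  by_cases hB' : (X ω, (1 : ℝ)) ∈ B <;> rcases hA01 ω with h | h <;>
    simp [h, hB']

end

section Projection

variable {Ω : Type*} {m m₀ m₂ mΩ : MeasurableSpace Ω} {μ : Measure Ω} [IsFiniteMeasure μ]

lemma integral_mul_eq_of_ae_eq_condExp (hm : m ≤ mΩ) {φ f g : Ω → ℝ}
    (hφ : StronglyMeasurable[m] φ) (hφf : Integrable (φ * f) μ) (hf : Integrable f μ)
    (hg : g =ᵐ[μ] μ[f|m]) :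
    ∫ ω, φ ω * f ω ∂μ = ∫ ω, φ ω * g ω ∂μ := by
  rw [← integral_condExp hm]
  refine integral_congr_ae ?_
  filter_upwards [condExp_mul_of_stronglyMeasurable_left hφ hφf hf, hg] with ω h hgω
  exact h.trans (by rw [Pi.mul_apply, hgω])

lemma condExp_eq_zero_of_eq_condExp_sub_condExp (h₀₂ : m₀ ≤ m₂) (h₂ : m₂ ≤ mΩ) {W c : Ω → ℝ}
    (hc : c =ᵐ[μ] μ[W|m₂] - μ[W|m₀]) :
    μ[c|m₀] =ᵐ[μ] 0 := by
  filter_upwards [condExp_congr_ae (m := m₀) hc,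
    condExp_sub (integrable_condExp (μ := μ) (m := m₂) (f := W))
      (integrable_condExp (m := m₀) (f := W)) m₀,
    condExp_condExp_of_le (μ := μ) (f := W) h₀₂ h₂,
    condExp_condExp_of_le (μ := μ) (f := W) le_rfl (h₀₂.trans h₂)] with ω hcω h h₂ h₀
  simp [hcω, h, h₂, h₀]

lemma integral_sub_mul_eq_zero_of_eq_condExp_sub_condExp (h₀₂ : m₀ ≤ m₂) (h₂ : m₂ ≤ mΩ)
    {W c f : Ω → ℝ} (hW : MemLp W 2 μ) (hc : c =ᵐ[μ] μ[W|m₂] - μ[W|m₀]) (hf : MemLp f 2 μ)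
    (hfm : StronglyMeasurable[m₂] f) (hf₀ : μ[f|m₀] =ᵐ[μ] 0) :
    ∫ ω, (W ω - c ω) * f ω ∂μ = 0 := by
  have hfW : Integrable (fun ω => f ω * W ω) μ := hf.integrable_mul hW
  have hfW₂ : Integrable (fun ω => f ω * μ[W|m₂] ω) μ :=
    hf.integrable_mul (hW.condExp one_le_two)
  have hW₀f : Integrable (fun ω => μ[W|m₀] ω * f ω) μ :=
    (hW.condExp one_le_two).integrable_mul hf
  have hWf_eq : ∫ ω, f ω * W ω ∂μ = ∫ ω, f ω * μ[W|m₂] ω ∂μ :=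
    integral_mul_eq_of_ae_eq_condExp h₂ hfm hfW (hW.integrable one_le_two) .rfl
  have hW₀f_eq : ∫ ω, μ[W|m₀] ω * f ω ∂μ = 0 := by
    simpa using integral_mul_eq_of_ae_eq_condExp (h₀₂.trans h₂) stronglyMeasurable_condExp
      hW₀f (hf.integrable one_le_two) hf₀.symm
  calc ∫ ω, (W ω - c ω) * f ω ∂μ
      = ∫ ω, (f ω * W ω - f ω * μ[W|m₂] ω + μ[W|m₀] ω * f ω) ∂μ := by
        refine integral_congr_ae ?_
        filter_upwards [hc] with ω hcω
        rw [hcω, Pi.sub_apply]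
        ring
    _ = ∫ ω, f ω * W ω ∂μ - ∫ ω, f ω * μ[W|m₂] ω ∂μ + ∫ ω, μ[W|m₀] ω * f ω ∂μ := by
        rw [integral_add (f := fun ω => f ω * W ω - f ω * μ[W|m₂] ω) (hfW.sub hfW₂) hW₀f,
          integral_sub hfW hfW₂]
    _ = 0 := by rw [hWf_eq, hW₀f_eq]; ring

end Projection

section MissingAtRandom

variable {Ω γ γZ : Type*} {m : MeasurableSpace Ω} [mΩ : MeasurableSpace Ω] [StandardBorelSpace Ω]
  [MeasurableSpace γ] [MeasurableSpace γZ] {μ : Measure Ω} [IsFiniteMeasure μ]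
  {Z : Ω → γZ} {R : Ω → ℝ}

lemma setIntegral_inter_preimage_eq_condExp {hm : m ≤ mΩ}
    (hZ : Measurable Z) (hR : Measurable R) (hR01 : ∀ ω, R ω = 0 ∨ R ω = 1)
    (hCI : CondIndepFun m hm R Z μ) {s : Set Ω} {t : Set γZ} (hs : MeasurableSet[m] s)
    (ht : MeasurableSet t) :
    ∫ ω in s ∩ Z ⁻¹' t, R ω ∂μ = ∫ ω in s ∩ Z ⁻¹' t, μ[R|m] ω ∂μ := by
  have hRZ := (condIndepFun_iff_condExp_inter_preimage_eq_mul hR hZ).mp hCI {1} t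
    (measurableSet_singleton 1) ht
  rw [indicator_preimage_one_eq_self hR01] at hRZ
  set χ : Ω → ℝ := (Z ⁻¹' t).indicator fun _ => 1 with hχ
  have hZt : MeasurableSet (Z ⁻¹' t) := hZ ht
  have hχR : χ * R = (R ⁻¹' {1} ∩ Z ⁻¹' t).indicator fun _ => 1 := by
    ext ω
    by_cases h : ω ∈ Z ⁻¹' t <;> rcases hR01 ω with h' | h' <;> simp [hχ, h, h']
  have hmul : Integrable (fun ω => μ[R|m] ω * χ ω) μ :=
    integrable_condExp.mul_bdd ((stronglyMeasurable_const.indicator hZt).aestronglyMeasurable)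
      (c := 1) (Eventually.of_forall fun ω => by by_cases h : ω ∈ Z ⁻¹' t <;> simp [hχ, h])
  calc ∫ ω in s ∩ Z ⁻¹' t, R ω ∂μ
      = ∫ ω in s, μ[χ * R|m] ω ∂μ := by
        rw [setIntegral_condExp hm (hχR ▸ (integrable_const 1).indicator ((hR
          (measurableSet_singleton 1)).inter hZt)) hs, ← setIntegral_indicator hZt]
        congr 1; ext ω
        by_cases h : ω ∈ Z ⁻¹' t <;> simp [hχ, h]
    _ = ∫ ω in s, μ[fun ω => μ[R|m] ω * χ ω|m] ω ∂μ := by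
        refine setIntegral_congr_ae (hm s hs) ?_
        filter_upwards [hRZ, condExp_mul_of_stronglyMeasurable_left stronglyMeasurable_condExp
          hmul ((integrable_const 1).indicator hZt)] with ω h1 h2 _
        rw [hχR, h1]
        exact h2.symm
    _ = ∫ ω in s ∩ Z ⁻¹' t, μ[R|m] ω ∂μ := by
        rw [setIntegral_condExp hm hmul hs, ← setIntegral_indicator hZt]
        congr 1; ext ω
        by_cases h : ω ∈ Z ⁻¹' t <;> simp [hχ, h]

lemma integral_mul_comp_eq_condExp_of_condIndepFun {G : Ω → γ} (hG : Measurable G)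
    (hZ : Measurable Z) (hR : Measurable R) (hR01 : ∀ ω, R ω = 0 ∨ R ω = 1)
    (hCI : CondIndepFun (MeasurableSpace.comap G inferInstance) hG.comap_le R Z μ)
    {F : γ × γZ → ℝ} (hF : Measurable F) :
    ∫ ω, R ω * F (G ω, Z ω) ∂μ
      = ∫ ω, μ[R|MeasurableSpace.comap G inferInstance] ω * F (G ω, Z ω) ∂μ := by
  have hR₀ : 0 ≤ᵐ[μ] R := Eventually.of_forall fun ω => by rcases hR01 ω with h | h <;> simp [h]
  have hRint : Integrable R μ :=
    (integrable_const (1 : ℝ)).mono' hR.aestronglyMeasurable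
      (Eventually.of_forall fun ω => by rcases hR01 ω with h | h <;> simp [h])
  set r := μ[R|MeasurableSpace.comap G inferInstance]
  have hr : Measurable r := (stronglyMeasurable_condExp.mono hG.comap_le).measurable
  have hr₀ : 0 ≤ᵐ[μ] r := condExp_nonneg hR₀
  have hmap : (μ.withDensity fun ω => ENNReal.ofReal (R ω)).map (fun ω => (G ω, Z ω))
      = (μ.withDensity fun ω => ENNReal.ofReal (r ω)).map (fun ω => (G ω, Z ω)) := by
    have : IsFiniteMeasure (μ.withDensity fun ω => ENNReal.ofReal (R ω)) :=
      isFiniteMeasure_withDensity_ofReal hRint.hasFiniteIntegral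
    have : IsFiniteMeasure (μ.withDensity fun ω => ENNReal.ofReal (r ω)) :=
      isFiniteMeasure_withDensity_ofReal integrable_condExp.hasFiniteIntegral
    have hrect : ∀ s t, MeasurableSet s → MeasurableSet t →
        (μ.withDensity fun ω => ENNReal.ofReal (R ω)).map (fun ω => (G ω, Z ω)) (s ×ˢ t)
          = (μ.withDensity fun ω => ENNReal.ofReal (r ω)).map (fun ω => (G ω, Z ω))
            (s ×ˢ t) := fun s t hs ht => by
      rw [map_withDensity_ofReal_prod_apply hG hZ hRint hR₀ hs ht,
        map_withDensity_ofReal_prod_apply hG hZ integrable_condExp hr₀ hs ht,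
        setIntegral_inter_preimage_eq_condExp hZ hR hR01 hCI ⟨s, hs, rfl⟩ ht]
    refine ext_of_generate_finite _ generateFrom_prod.symm isPiSystem_prod ?_ ?_
    · rintro _ ⟨s, hs, t, ht, rfl⟩
      exact hrect s t hs ht
    · simpa using hrect Set.univ Set.univ MeasurableSet.univ MeasurableSet.univ
  rw [← integral_map_withDensity_ofReal hR hR₀ (hG.prodMk hZ) hF,
    ← integral_map_withDensity_ofReal hr hr₀ (hG.prodMk hZ) hF, hmap]

end MissingAtRandom

section InverseProbabilityWeighting

variable {Ω γ γZ β : Type*} [MeasurableSpace Ω] [StandardBorelSpace Ω]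
  [MeasurableSpace γ] [MeasurableSpace γZ] [MeasurableSpace β] {μ : Measure Ω} [IsFiniteMeasure μ]
  {V : Ω → γ} {A R : Ω → ℝ} {Z : Ω → γZ} {η : γ → ℝ → ℝ} {X : Ω → β}

lemma setIntegral_preimage_mul_mul_div_eq (hV : Measurable V) (hA : Measurable A)
    (hZ : Measurable Z) (hR : Measurable R) (hA01 : ∀ ω, A ω = 0 ∨ A ω = 1)
    (hR01 : ∀ ω, R ω = 0 ∨ R ω = 1)
    (hCI : CondIndepFun (MeasurableSpace.comap (fun ω => (V ω, A ω)) inferInstance)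
      (hV.prodMk hA).comap_le R Z μ)
    (hη : Measurable (Function.uncurry η))
    (hηver : (fun ω => η (V ω) (A ω))
      =ᵐ[μ] μ[R|MeasurableSpace.comap (fun ω => (V ω, A ω)) inferInstance])
    (hη₁ : ∀ᵐ ω ∂μ, η (V ω) 1 ≠ 0) {ξ : (γ × ℝ) × γZ → β} (hξ : Measurable ξ)
    (hXξ : ∀ ω, X ω = ξ ((V ω, A ω), Z ω)) {B : Set β} (hB : MeasurableSet B)
    {F : (γ × ℝ) × γZ → ℝ} (hF : Measurable F) :
    ∫ ω in X ⁻¹' B, A ω * R ω * F ((V ω, A ω), Z ω) / η (V ω) 1 ∂μ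
      = ∫ ω in X ⁻¹' B, A ω * F ((V ω, A ω), Z ω) ∂μ := by
  have hX : Measurable X := funext hXξ ▸ hξ.comp ((hV.prodMk hA).prodMk hZ)
  set F' : (γ × ℝ) × γZ → ℝ := fun x => B.indicator (fun _ => 1) (ξ x) * (x.1.2 * F x / η x.1.1 1)
  have hF' : Measurable F' :=
    ((measurable_const.indicator hB).comp hξ).mul ((measurable_fst.snd.mul hF).div
      (hη.comp (measurable_fst.fst.prodMk measurable_const)))
  rw [← integral_indicator (hX hB), ← integral_indicator (hX hB)]
  calc ∫ ω, (X ⁻¹' B).indicator (fun ω => A ω * R ω * F ((V ω, A ω), Z ω) / η (V ω) 1) ω ∂μ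
      = ∫ ω, R ω * F' ((V ω, A ω), Z ω) ∂μ := by
        congr 1; ext ω
        by_cases h : X ω ∈ B <;> simp [F', h, ← hXξ]; ring
    -- MAR lets `η(V, A)` replace `R`; on `{A = 1}` it cancels the weight `1 / η(V, 1)`.
    _ = ∫ ω, η (V ω) (A ω) * F' ((V ω, A ω), Z ω) ∂μ := by
        rw [integral_mul_comp_eq_condExp_of_condIndepFun (hV.prodMk hA) hZ hR hR01 hCI hF']
        exact integral_congr_ae (hηver.symm.mul .rfl)
    _ = ∫ ω, (X ⁻¹' B).indicator (fun ω => A ω * F ((V ω, A ω), Z ω)) ω ∂μ := by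
        refine integral_congr_ae ?_
        filter_upwards [hη₁] with ω hω
        simp only [F', ← hXξ ω]
        by_cases h : X ω ∈ B <;> rcases hA01 ω with hA' | hA' <;>
          simp [h, hA', mul_div_cancel₀ _ hω]

lemma setIntegral_preimage_mul_eq_of_ae_eq_condExp_cond (hV : Measurable V) (hA : Measurable A)
    (hZ : Measurable Z) (hR : Measurable R) (hA01 : ∀ ω, A ω = 0 ∨ A ω = 1)
    (hR01 : ∀ ω, R ω = 0 ∨ R ω = 1)
    (hCI : CondIndepFun (MeasurableSpace.comap (fun ω => (V ω, A ω)) inferInstance)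
      (hV.prodMk hA).comap_le R Z μ)
    (hη : Measurable (Function.uncurry η))
    (hηver : (fun ω => η (V ω) (A ω))
      =ᵐ[μ] μ[R|MeasurableSpace.comap (fun ω => (V ω, A ω)) inferInstance])
    {ε₀ : ℝ} (hε₀ : 0 < ε₀) (hηpos : ∀ᵐ ω ∂μ, ε₀ ≤ η (V ω) 1)
    (hSpos : 0 < μ {ω | A ω = 1 ∧ R ω = 1})
    {ξ : (γ × ℝ) × γZ → β} (hξ : Measurable ξ) (hXξ : ∀ ω, X ω = ξ ((V ω, A ω), Z ω))
    {ρ : β → γ} (hρ : Measurable ρ) (hVρ : ∀ ω, V ω = ρ (X ω))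
    {E : (γ × ℝ) × γZ → ℝ} (hE : Measurable E) (hE1 : ∀ x, |E x| ≤ 1)
    {τ : β → ℝ} (hτ : Measurable τ)
    (hτver : (fun ω => τ (X ω)) =ᵐ[μ[|{ω | A ω = 1 ∧ R ω = 1}]]
      (μ[|{ω | A ω = 1 ∧ R ω = 1}])[(fun ω => E ((V ω, A ω), Z ω))|
        MeasurableSpace.comap X inferInstance])
    {B : Set β} (hB : MeasurableSet B) :
    ∫ ω in X ⁻¹' B, A ω * E ((V ω, A ω), Z ω) ∂μ = ∫ ω in X ⁻¹' B, A ω * τ (X ω) ∂μ := by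
  set S := {ω | A ω = 1 ∧ R ω = 1}
  have hX : Measurable X := funext hXξ ▸ hξ.comp ((hV.prodMk hA).prodMk hZ)
  have hS : MeasurableSet S :=
    (hA (measurableSet_singleton 1)).inter (hR (measurableSet_singleton 1))
  have hμS : (μ S).toReal ≠ 0 := ENNReal.toReal_ne_zero.mpr ⟨hSpos.ne', measure_ne_top μ S⟩
  have : IsProbabilityMeasure (μ[|S]) := cond_isProbabilityMeasure hSpos.ne'
  set ψ : β → ℝ := fun b => B.indicator (fun _ => 1) b / η (ρ b) 1
  have hψ : Measurable ψ := (measurable_const.indicator hB).div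
    (hη.comp ((hρ.prodMk measurable_const)))
  have hreweight : ∀ {F : (γ × ℝ) × γZ → ℝ}, Measurable F →
      ∫ ω in X ⁻¹' B, A ω * F ((V ω, A ω), Z ω) ∂μ
        = (μ S).toReal * ∫ ω, ψ (X ω) * F ((V ω, A ω), Z ω) ∂μ[|S] := fun {F} hF => by
    rw [← setIntegral_preimage_mul_mul_div_eq hV hA hZ hR hA01 hR01 hCI hη hηver
      (hηpos.mono fun ω h => (hε₀.trans_le h).ne') hξ hXξ hB hF,
      integral_cond_eq_inv_mul_setIntegral, ← mul_assoc, mul_inv_cancel₀ hμS, one_mul,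
      ← integral_indicator (hX hB), ← integral_indicator hS]
    congr 1; ext ω
    by_cases h : X ω ∈ B <;> rcases hA01 ω with hA' | hA' <;> rcases hR01 ω with hR' | hR' <;>
      simp [S, ψ, h, hA', hR', ← hVρ ω]; ring
  have hψX : ∀ᵐ ω ∂μ, ‖ψ (X ω)‖ ≤ ε₀⁻¹ := by
    filter_upwards [hηpos] with ω h
    have hη_pos : 0 < η (V ω) 1 := hε₀.trans_le h
    by_cases hB' : X ω ∈ B
    · simpa [ψ, hB', ← hVρ ω, abs_of_pos hη_pos] using inv_anti₀ hε₀ h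
    · simp [ψ, hB', hε₀.le]
  have hEint : Integrable (fun ω => E ((V ω, A ω), Z ω)) (μ[|S]) :=
    (integrable_const 1).mono' (hE.comp ((hV.prodMk hA).prodMk hZ)).aestronglyMeasurable
      (Eventually.of_forall fun ω => hE1 _)
  calc ∫ ω in X ⁻¹' B, A ω * E ((V ω, A ω), Z ω) ∂μ
      = (μ S).toReal * ∫ ω, ψ (X ω) * E ((V ω, A ω), Z ω) ∂μ[|S] := hreweight hE
    _ = (μ S).toReal * ∫ ω, ψ (X ω) * τ (X ω) ∂μ[|S] := by
        congr 1
        exact integral_mul_eq_of_ae_eq_condExp (φ := fun ω => ψ (X ω)) hX.comap_le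
          (hψ.comp (comap_measurable X)).stronglyMeasurable
          (hEint.bdd_mul (hψ.comp hX).aestronglyMeasurable
            (cond_absolutelyContinuous.ae_le hψX)) hEint hτver
    _ = ∫ ω in X ⁻¹' B, A ω * τ (X ω) ∂μ := by
        simpa only [← hXξ] using (hreweight (F := fun x => τ (ξ x)) (hτ.comp hξ)).symm

theorem condExp_mul_mul_div_ae_eq (hV : Measurable V) (hA : Measurable A)
    (hZ : Measurable Z) (hR : Measurable R) (hA01 : ∀ ω, A ω = 0 ∨ A ω = 1)
    (hR01 : ∀ ω, R ω = 0 ∨ R ω = 1)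
    (hCI : CondIndepFun (MeasurableSpace.comap (fun ω => (V ω, A ω)) inferInstance)
      (hV.prodMk hA).comap_le R Z μ)
    (hη : Measurable (Function.uncurry η))
    (hηver : (fun ω => η (V ω) (A ω))
      =ᵐ[μ] μ[R|MeasurableSpace.comap (fun ω => (V ω, A ω)) inferInstance])
    {ε₀ : ℝ} (hε₀ : 0 < ε₀) (hηpos : ∀ᵐ ω ∂μ, ε₀ ≤ η (V ω) 1)
    (hSpos : 0 < μ {ω | A ω = 1 ∧ R ω = 1})
    {ξ : (γ × ℝ) × γZ → β} (hξ : Measurable ξ) (hXξ : ∀ ω, X ω = ξ ((V ω, A ω), Z ω))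
    {ρ : β → γ} (hρ : Measurable ρ) (hVρ : ∀ ω, V ω = ρ (X ω))
    {E : (γ × ℝ) × γZ → ℝ} (hE : Measurable E) (hE1 : ∀ x, |E x| ≤ 1)
    {τ : β → ℝ} (hτ : Measurable τ) (hτ1 : ∀ b, |τ b| ≤ 1)
    (hτver : (fun ω => τ (X ω)) =ᵐ[μ[|{ω | A ω = 1 ∧ R ω = 1}]]
      (μ[|{ω | A ω = 1 ∧ R ω = 1}])[(fun ω => E ((V ω, A ω), Z ω))|
        MeasurableSpace.comap X inferInstance]) :
    μ[fun ω => A ω * R ω * E ((V ω, A ω), Z ω) / η (V ω) 1|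
        MeasurableSpace.comap (fun ω => (X ω, A ω)) inferInstance]
      =ᵐ[μ] fun ω => A ω * τ (X ω) := by
  have hX : Measurable X := funext hXξ ▸ hξ.comp ((hV.prodMk hA).prodMk hZ)
  have hW : Integrable (fun ω => A ω * R ω * E ((V ω, A ω), Z ω) / η (V ω) 1) μ :=
    (integrable_const ε₀⁻¹).mono' (((hA.mul hR).mul (hE.comp ((hV.prodMk hA).prodMk hZ))).div
      (hη.comp (hV.prodMk measurable_const))).aestronglyMeasurable (hηpos.mono fun ω h =>
      abs_mul_mul_div_le_inv (hA01 ω) (hR01 ω) (hE1 _) hε₀ h)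
  have hAτ : Integrable (fun ω => A ω * τ (X ω)) μ :=
    (integrable_const 1).mono' (by fun_prop) (Eventually.of_forall fun ω => by
      rcases hA01 ω with h | h <;> simp [h, hτ1])
  refine (ae_eq_condExp_of_forall_setIntegral_eq (hX.prodMk hA).comap_le hW
    (fun _ _ _ => hAτ.integrableOn) ?_ ?_).symm
  · rintro _ ⟨B, hB, rfl⟩ -
    have hB₁ : MeasurableSet ((fun b => (b, (1 : ℝ))) ⁻¹' B) := measurable_prodMk_right hB
    calc ∫ ω in (fun ω => (X ω, A ω)) ⁻¹' B, A ω * τ (X ω) ∂μ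
        = ∫ ω in X ⁻¹' ((fun b => (b, 1)) ⁻¹' B), A ω * E ((V ω, A ω), Z ω) ∂μ := by
          rw [setIntegral_preimage_prodMk_mul_eq hX hA hA01 hB,
            setIntegral_preimage_mul_eq_of_ae_eq_condExp_cond hV hA hZ hR hA01 hR01 hCI hη hηver
              hε₀ hηpos hSpos hξ hXξ hρ hVρ hE hE1 hτ hτver hB₁]
      _ = ∫ ω in (fun ω => (X ω, A ω)) ⁻¹' B, A ω * (R ω * E ((V ω, A ω), Z ω) / η (V ω) 1) ∂μ := by
          rw [setIntegral_preimage_prodMk_mul_eq hX hA hA01 hB,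
            ← setIntegral_preimage_mul_mul_div_eq hV hA hZ hR hA01 hR01 hCI hη hηver
              (hηpos.mono fun ω h => (hε₀.trans_le h).ne') hξ hXξ hB₁ hE]
          simp only [mul_div_assoc, mul_assoc]
      _ = ∫ ω in (fun ω => (X ω, A ω)) ⁻¹' B, A ω * R ω * E ((V ω, A ω), Z ω) / η (V ω) 1 ∂μ := by
          simp only [mul_div_assoc, mul_assoc]
  · exact ((measurable_snd.mul (hτ.comp measurable_fst)).comp
      (comap_measurable fun ω => (X ω, A ω))).aestronglyMeasurable

end InverseProbabilityWeighting

theorem stmt_12_general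
    {Ω : Type*} [𝓕 : MeasurableSpace Ω] [StandardBorelSpace Ω]
    (μ : Measure Ω) [IsProbabilityMeasure μ]
    {p q : ℕ}
    (Lstar : Ω → Fin p → ℝ) (L : Ω → Fin q → ℝ) (A R Y : Ω → ℝ)
    (hLstar : Measurable Lstar) (hL : Measurable L)
    (hA : Measurable A) (hR : Measurable R) (hY : Measurable Y)
    (hA01 : ∀ ω, A ω = 0 ∨ A ω = 1) (hR01 : ∀ ω, R ω = 0 ∨ R ω = 1)
    (g : (Fin q → ℝ) → ℝ → ℝ) (hg : Measurable (Function.uncurry g))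
    (hg01 : ∀ x a, g x a = 0 ∨ g x a = 1)
    -- Assumption A4 (MAR): R ⫫ (L, Y) | σ(L*, A)
    (hMAR : CondIndepFun (MeasurableSpace.comap (fun ω => (Lstar ω, A ω)) inferInstance)
      ((hLstar.prodMk hA).comap_le) R (fun ω => (L ω, Y ω)) μ)
    -- Assumption A5 (missingness positivity)
    (η : (Fin p → ℝ) → ℝ → ℝ) (hη : Measurable (Function.uncurry η))
    (hηver : (fun ω => η (Lstar ω) (A ω)) =ᵐ[μ]
      μ[R|MeasurableSpace.comap (fun ω => (Lstar ω, A ω)) inferInstance])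
    (ε₀ : ℝ) (hε₀ : 0 < ε₀)
    (hηpos : ∀ᵐ ω ∂μ, ε₀ ≤ η (Lstar ω) 0 ∧ ε₀ ≤ η (Lstar ω) 1)
    (hA1R : 0 < μ {ω | A ω = 1 ∧ R ω = 1})
    (ε₁f : (Fin p → ℝ) → ℝ → ℝ) (hε₁f : Measurable (Function.uncurry ε₁f))
    (hε₁01 : ∀ x y, ε₁f x y ∈ Set.Icc (0:ℝ) 1)
    (hε₁ver : (fun ω => ε₁f (Lstar ω) (Y ω)) =ᵐ[μ[|{ω | A ω = 1 ∧ R ω = 1}]]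
      (μ[|{ω | A ω = 1 ∧ R ω = 1}])[(fun ω => g (L ω) (A ω))|MeasurableSpace.comap
          (fun ω => (Lstar ω, Y ω)) inferInstance])
    (ω₁ : (Fin p → ℝ) → ℝ) (hω₁ : Measurable ω₁)
    (hω₁01 : ∀ x, ω₁ x ∈ Set.Icc (0:ℝ) 1)
    (hω₁ver : (fun ω => ω₁ (Lstar ω)) =ᵐ[μ[|{ω | A ω = 1 ∧ R ω = 1}]]
      (μ[|{ω | A ω = 1 ∧ R ω = 1}])[(fun ω => g (L ω) (A ω))|MeasurableSpace.comap
          Lstar inferInstance]) :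
    (μ[(fun ω => A ω * R ω * g (L ω) (A ω) / η (Lstar ω) 1)|
        MeasurableSpace.comap (fun ω => (Lstar ω, A ω, Y ω)) inferInstance]
      =ᵐ[μ] fun ω => A ω * ε₁f (Lstar ω) (Y ω)) ∧
    (μ[(fun ω => A ω * R ω * g (L ω) (A ω) / η (Lstar ω) 1)|
        MeasurableSpace.comap (fun ω => (Lstar ω, A ω)) inferInstance]
      =ᵐ[μ] fun ω => A ω * ω₁ (Lstar ω)) ∧
    -- the candidate projection lies in the tangent-space component Λ_{Y|L*,A} ...
    (MemLp (fun ω => A ω * (ε₁f (Lstar ω) (Y ω) - ω₁ (Lstar ω))) 2 μ) ∧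
    (Measurable[MeasurableSpace.comap (fun ω => (Lstar ω, A ω, Y ω)) inferInstance]
      (fun ω => A ω * (ε₁f (Lstar ω) (Y ω) - ω₁ (Lstar ω)))) ∧
    (μ[(fun ω => A ω * (ε₁f (Lstar ω) (Y ω) - ω₁ (Lstar ω)))|
        MeasurableSpace.comap (fun ω => (Lstar ω, A ω)) inferInstance] =ᵐ[μ] fun _ => 0) ∧
    -- ... and the residual is orthogonal to every element of that component
    (∀ f : Ω → ℝ, MemLp f 2 μ →
      Measurable[MeasurableSpace.comap (fun ω => (Lstar ω, A ω, Y ω)) inferInstance] f →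
      (μ[f|MeasurableSpace.comap (fun ω => (Lstar ω, A ω)) inferInstance] =ᵐ[μ] fun _ => 0) →
      ∫ ω, (A ω * R ω * g (L ω) (A ω) / η (Lstar ω) 1
          - A ω * (ε₁f (Lstar ω) (Y ω) - ω₁ (Lstar ω))) * f ω ∂μ = 0) := by
  set W := fun ω => A ω * R ω * g (L ω) (A ω) / η (Lstar ω) 1
  have hm₀₂ : MeasurableSpace.comap (fun ω => (Lstar ω, A ω)) inferInstance
      ≤ MeasurableSpace.comap (fun ω => (Lstar ω, A ω, Y ω)) inferInstance :=
    MeasurableSpace.comap_le_comap_of_eq_comp (fun x => (x.1, x.2.1)) (by fun_prop) rfl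
  have hm₂ := (hLstar.prodMk (hA.prodMk hY)).comap_le
  have hσ : MeasurableSpace.comap (fun ω => (Lstar ω, A ω, Y ω)) inferInstance
      = MeasurableSpace.comap (fun ω => ((Lstar ω, Y ω), A ω)) inferInstance :=
    le_antisymm
      (MeasurableSpace.comap_le_comap_of_eq_comp (fun x => (x.1.1, x.2, x.1.2)) (by fun_prop) rfl)
      (MeasurableSpace.comap_le_comap_of_eq_comp (fun x => ((x.1, x.2.2), x.2.1)) (by fun_prop) rfl)
  have hE : Measurable fun x : ((Fin p → ℝ) × ℝ) × (Fin q → ℝ) × ℝ => g x.2.1 x.1.2 :=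
    hg.comp (measurable_snd.fst.prodMk measurable_fst.snd)
  have hE1 : ∀ x a, |g x a| ≤ 1 := fun x a => by rcases hg01 x a with h | h <;> simp [h]
  have hη₁ : ∀ᵐ ω ∂μ, ε₀ ≤ η (Lstar ω) 1 := hηpos.mono fun _ h => h.2
  have hIcc : ∀ {t : ℝ}, t ∈ Set.Icc 0 1 → |t| ≤ 1 := fun h => abs_le.mpr ⟨by linarith [h.1], h.2⟩
  have hcondY : μ[W|MeasurableSpace.comap (fun ω => (Lstar ω, A ω, Y ω)) inferInstance]
      =ᵐ[μ] fun ω => A ω * ε₁f (Lstar ω) (Y ω) := by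
    rw [hσ]
    exact condExp_mul_mul_div_ae_eq hLstar hA (hL.prodMk hY) hR hA01 hR01 hMAR hη hηver hε₀ hη₁
      hA1R (ξ := fun x => (x.1.1, x.2.2)) (by fun_prop) (fun _ => rfl) measurable_fst
      (fun _ => rfl) hE (fun _ => hE1 _ _) hε₁f (fun b => hIcc (hε₁01 b.1 b.2)) hε₁ver
  have hcond : μ[W|MeasurableSpace.comap (fun ω => (Lstar ω, A ω)) inferInstance]
      =ᵐ[μ] fun ω => A ω * ω₁ (Lstar ω) :=
    condExp_mul_mul_div_ae_eq hLstar hA (hL.prodMk hY) hR hA01 hR01 hMAR hη hηver hε₀ hη₁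
      hA1R (ξ := fun x => x.1.1) (by fun_prop) (fun _ => rfl) measurable_id
      (fun _ => rfl) hE (fun _ => hE1 _ _) hω₁ (fun b => hIcc (hω₁01 b)) hω₁ver
  have hW : MemLp W 2 μ :=
    MemLp.of_bound (((hA.mul hR).mul (hE.comp ((hLstar.prodMk hA).prodMk (hL.prodMk hY)))).div
      (hη.comp (hLstar.prodMk measurable_const))).aestronglyMeasurable ε₀⁻¹
      (hη₁.mono fun ω h => abs_mul_mul_div_le_inv (hA01 ω) (hR01 ω) (hE1 _ _) hε₀ h)
  have hcand : (fun ω => A ω * (ε₁f (Lstar ω) (Y ω) - ω₁ (Lstar ω)))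
      =ᵐ[μ] μ[W|MeasurableSpace.comap (fun ω => (Lstar ω, A ω, Y ω)) inferInstance]
        - μ[W|MeasurableSpace.comap (fun ω => (Lstar ω, A ω)) inferInstance] := by
    filter_upwards [hcondY, hcond] with ω h₁ h₂
    rw [Pi.sub_apply, h₁, h₂, mul_sub]
  refine ⟨hcondY, hcond, ?_, ?_, condExp_eq_zero_of_eq_condExp_sub_condExp hm₀₂ hm₂ hcand,
    fun f hf hfm hf₀ => integral_sub_mul_eq_zero_of_eq_condExp_sub_condExp hm₀₂ hm₂ hW hcand hf
      hfm.stronglyMeasurable hf₀⟩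
  · exact MemLp.of_bound (by fun_prop) 1 (Eventually.of_forall fun ω =>
      abs_mul_sub_le_one (hA01 ω) (hε₁01 _ _) (hω₁01 _))
  · exact (measurable_snd.fst.mul ((hε₁f.comp (measurable_fst.prodMk measurable_snd.snd)).sub
      (hω₁.comp measurable_fst))).comp (comap_measurable _)

/-- **Projection identity for the efficient influence function of α.**
The conditional expectations of `A·R·E/η₁(L*)` given σ(L*,A,Y) and σ(L*,A) are
`A·ε₁(L*,Y)` and `A·ω₁(L*)`, and consequently the projection of `A·R·E/η₁(L*)` onto
`{f ∈ L² : f is σ(L*,A,Y)-measurable and E[f | σ(L*,A)] = 0}` equals `A·(ε₁ − ω₁)`. -/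
theorem stmt_12
    {Ω : Type*} [𝓕 : MeasurableSpace Ω] [StandardBorelSpace Ω] [Nonempty Ω]
    (μ : Measure Ω) [IsProbabilityMeasure μ]
    {p q : ℕ}
    (Lstar : Ω → Fin p → ℝ) (L : Ω → Fin q → ℝ) (A R Y : Ω → ℝ)
    (hLstar : Measurable Lstar) (hL : Measurable L)
    (hA : Measurable A) (hR : Measurable R) (hY : Measurable Y)
    (hA01 : ∀ ω, A ω = 0 ∨ A ω = 1) (hR01 : ∀ ω, R ω = 0 ∨ R ω = 1)
    (hY2 : MemLp Y 2 μ)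
    (g : (Fin q → ℝ) → ℝ → ℝ) (hg : Measurable (Function.uncurry g))
    (hg01 : ∀ x a, g x a = 0 ∨ g x a = 1)
    -- Assumption A4 (MAR): R ⫫ (L, Y) | σ(L*, A)
    (hMAR : CondIndepFun (MeasurableSpace.comap (fun ω => (Lstar ω, A ω)) inferInstance)
      ((hLstar.prodMk hA).comap_le) R (fun ω => (L ω, Y ω)) μ)
    -- Assumption A5 (missingness positivity)
    (η : (Fin p → ℝ) → ℝ → ℝ) (hη : Measurable (Function.uncurry η))
    (hηver : (fun ω => η (Lstar ω) (A ω)) =ᵐ[μ]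
      μ[R|MeasurableSpace.comap (fun ω => (Lstar ω, A ω)) inferInstance])
    (ε₀ : ℝ) (hε₀ : 0 < ε₀)
    (hηpos : ∀ᵐ ω ∂μ, ε₀ ≤ η (Lstar ω) 0 ∧ ε₀ ≤ η (Lstar ω) 1)
    (hA1R : 0 < μ {ω | A ω = 1 ∧ R ω = 1})
    (ε₁f : (Fin p → ℝ) → ℝ → ℝ) (hε₁f : Measurable (Function.uncurry ε₁f))
    (hε₁01 : ∀ x y, ε₁f x y ∈ Set.Icc (0:ℝ) 1)
    (hε₁ver : (fun ω => ε₁f (Lstar ω) (Y ω)) =ᵐ[μ[|{ω | A ω = 1 ∧ R ω = 1}]]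
      (μ[|{ω | A ω = 1 ∧ R ω = 1}])[(fun ω => g (L ω) (A ω))|MeasurableSpace.comap
          (fun ω => (Lstar ω, Y ω)) inferInstance])
    (ω₁ : (Fin p → ℝ) → ℝ) (hω₁ : Measurable ω₁)
    (hω₁01 : ∀ x, ω₁ x ∈ Set.Icc (0:ℝ) 1)
    (hω₁ver : (fun ω => ω₁ (Lstar ω)) =ᵐ[μ[|{ω | A ω = 1 ∧ R ω = 1}]]
      (μ[|{ω | A ω = 1 ∧ R ω = 1}])[(fun ω => g (L ω) (A ω))|MeasurableSpace.comap
          Lstar inferInstance]) :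
    (μ[(fun ω => A ω * R ω * g (L ω) (A ω) / η (Lstar ω) 1)|
        MeasurableSpace.comap (fun ω => (Lstar ω, A ω, Y ω)) inferInstance]
      =ᵐ[μ] fun ω => A ω * ε₁f (Lstar ω) (Y ω)) ∧
    (μ[(fun ω => A ω * R ω * g (L ω) (A ω) / η (Lstar ω) 1)|
        MeasurableSpace.comap (fun ω => (Lstar ω, A ω)) inferInstance]
      =ᵐ[μ] fun ω => A ω * ω₁ (Lstar ω)) ∧
    -- the candidate projection lies in the tangent-space component Λ_{Y|L*,A} ...
    (MemLp (fun ω => A ω * (ε₁f (Lstar ω) (Y ω) - ω₁ (Lstar ω))) 2 μ) ∧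
    (Measurable[MeasurableSpace.comap (fun ω => (Lstar ω, A ω, Y ω)) inferInstance]
      (fun ω => A ω * (ε₁f (Lstar ω) (Y ω) - ω₁ (Lstar ω)))) ∧
    (μ[(fun ω => A ω * (ε₁f (Lstar ω) (Y ω) - ω₁ (Lstar ω)))|
        MeasurableSpace.comap (fun ω => (Lstar ω, A ω)) inferInstance] =ᵐ[μ] fun _ => 0) ∧
    -- ... and the residual is orthogonal to every element of that component
    (∀ f : Ω → ℝ, MemLp f 2 μ →
      Measurable[MeasurableSpace.comap (fun ω => (Lstar ω, A ω, Y ω)) inferInstance] f →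
      (μ[f|MeasurableSpace.comap (fun ω => (Lstar ω, A ω)) inferInstance] =ᵐ[μ] fun _ => 0) →
      ∫ ω, (A ω * R ω * g (L ω) (A ω) / η (Lstar ω) 1
          - A ω * (ε₁f (Lstar ω) (Y ω) - ω₁ (Lstar ω))) * f ω ∂μ = 0) :=
  stmt_12_general (𝓕 := 𝓕) μ Lstar L A R Y hLstar hL hA hR hY hA01 hR01 g hg hg01 hMAR η hη hηver ε₀
    hε₀ hηpos hA1R ε₁f hε₁f hε₁01 hε₁ver ω₁ hω₁ hω₁01 hω₁ver
end

section
/- (The efficient influence function of β is centered at β(P).) Under the setup and Assumptions A4 and A5, let the nuisance functions be: μ₀(L*,L) a bounded version of E[Y | σ(L*,L)] under μ(·|{A=0,R=1}); u(L*,L) a version of E[A | σ(L*,L)] under μ(·|{R=1}) with δ ≤ u ≤ 1−δ a.s.; under μ(·|{A=1,R=1}), ε₁(L*,Y) a version of E[E | σ(L*,Y)] and ξ(L*,Y) a version of E[E·μ₀(L*,L) | σ(L*,Y)]; and under μ(·|{A=0,R=1}), γ(L*,Y) a version of E[E·(u/(1−u))(L*,L) | σ(L*,Y)] and χ(L*,Y)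 a version of E[E·(u/(1−u))(L*,L)·μ₀(L*,L) | σ(L*,Y)]. Then E[(A·R/η₁(L*))·{(E − ε₁(L*,Y))·Y − (E·μ₀(L*,L) − ξ(L*,Y))} + A·(ε₁(L*,Y)·Y − ξ(L*,Y)) − ((1−A)·R/η₁(L*))·{E·(u/(1−u))(L*,L)·(Y − μ₀(L*,L)) − (γ(L*,Y)·Y − χ(L*,Y))} − (1−A)·(η₀(L*)/η₁(L*))·(γ(L*,Y)·Y − χ(L*,Y))] = E[(A·R·E/η₁(L*))·(Y − μ₀(L*,L))]. -/
/-!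
Write `E = g(L, A)`, `η_a = η(L*, a)` and `w = u / (1 - u)`. Pointwise (using `A, R ∈ {0, 1}`),
the integrand equals
  `(A R E / η₁) (Y - μ₀) + F (η(L*, A) - R) - 1{A = 0, R = 1} (E w / η₁) (Y - μ₀)`,
with `F = (A (ε₁ Y - ξ) - (1 - A) (γ Y - χ)) / η₁` a function of `(L*, A, L, Y)`.
By MAR, `𝔼[R | L*, A, L, Y] = η(L*, A)`, so the middle (augmentation) term has mean zero;
the last term has mean zero because `μ₀` is the regression of `Y` on `(L*, L)` among untreated
complete cases. The nested nuisances `ε₁, ξ, γ, χ` only matter for integrability: as conditional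
expectations of bounded variables they are bounded on complete cases, and MAR together with
`η ≥ ε₀` transfers such bounds from `{R = 1}` to the whole population.
-/

open MeasureTheory ProbabilityTheory

theorem abs_div_le_div_of_le {x y a ε : ℝ} (hx : |x| ≤ a) (hε : 0 < ε) (hy : ε ≤ y) :
    |x / y| ≤ a / ε := by
  rw [abs_div, abs_of_pos (hε.trans_le hy)]
  exact div_le_div₀ ((abs_nonneg x).trans hx) hx hε hy

theorem abs_mul_le_of_le {x y a b : ℝ} (hx : |x| ≤ a) (hy : |y| ≤ b) : |x * y| ≤ a * b := by
  rw [abs_mul]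
  exact mul_le_mul hx hy (abs_nonneg y) ((abs_nonneg x).trans hx)

theorem abs_mul_sub_le {e x y a b : ℝ} (he : |e| ≤ a) (hx : |x| ≤ b) :
    |e * y - x| ≤ a * |y| + b := by
  calc |e * y - x| ≤ |e| * |y| + |x| := (abs_sub _ _).trans_eq (by rw [abs_mul])
    _ ≤ a * |y| + b := add_le_add (mul_le_mul_of_nonneg_right he (abs_nonneg y)) hx

theorem abs_div_one_sub_le_inv {u δ : ℝ} (hδ : 0 < δ) (hu : 0 ≤ u) (hu' : u ≤ 1 - δ) :
    |u / (1 - u)| ≤ δ⁻¹ := by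
  rw [← one_div]
  exact abs_div_le_div_of_le (by rw [abs_of_nonneg hu]; linarith) hδ (by linarith)

section ConditionalExpectation

variable {Ω : Type*} {m : MeasurableSpace Ω} [mΩ : MeasurableSpace Ω] {μ : Measure Ω}
  {s : Set Ω}

theorem integrable_of_forall_eq_zero_or_eq_one [IsFiniteMeasure μ] {R : Ω → ℝ}
    (hR : Measurable R) (hR01 : ∀ ω, R ω = 0 ∨ R ω = 1) : Integrable R μ :=
  .of_bound hR.aestronglyMeasurable 1
    (ae_of_all _ fun ω => by rcases hR01 ω with h | h <;> simp [h])

theorem ae_abs_le_one_of_ae_eq_condExp {R η : Ω → ℝ} (hR01 : ∀ ω, R ω = 0 ∨ R ω = 1)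
    (hη : η =ᵐ[μ] μ[R | m]) : ∀ᵐ ω ∂μ, |η ω| ≤ 1 := by
  filter_upwards [hη, ae_bdd_abs_condExp_of_ae_bdd_abs (m := m) (μ := μ) (f := R) (R := (1 : ℝ))
    (ae_of_all _ fun ω => by rcases hR01 ω with h | h <;> simp [h])] with ω h1 h2
  rwa [h1]

theorem integrable_mul_sub_of_ae_eq_condExp {F R η : Ω → ℝ} (hF : Integrable F μ)
    (hR : Measurable R) (hR01 : ∀ ω, R ω = 0 ∨ R ω = 1) (hη : η =ᵐ[μ] μ[R | m]) :
    Integrable (fun ω => F ω * (η ω - R ω)) μ := by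
  refine hF.mul_bdd (c := 1 + 1)
    ((integrable_condExp.1.congr hη.symm).sub hR.aestronglyMeasurable) ?_
  filter_upwards [ae_abs_le_one_of_ae_eq_condExp hR01 hη] with ω h
  exact (abs_sub _ _).trans (add_le_add h (by rcases hR01 ω with h | h <;> simp [h]))

theorem ae_imp_of_ae_cond [IsFiniteMeasure μ] (hs : MeasurableSet s) {p : Ω → Prop}
    (h : ∀ᵐ ω ∂μ[|s], p ω) : ∀ᵐ ω ∂μ, ω ∈ s → p ω := by
  rw [ProbabilityTheory.cond,
    Measure.ae_ennreal_smul_measure_iff (ENNReal.inv_ne_zero.2 (measure_ne_top μ s))] at h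
  exact (ae_restrict_iff' hs).1 h

theorem ae_abs_le_of_ae_eq_condExp_cond [IsFiniteMeasure μ] (hs : MeasurableSet s)
    {f ψ : Ω → ℝ} {c : ℝ} (hf : ∀ᵐ ω ∂μ[|s], |f ω| ≤ c) (hψ : ψ =ᵐ[μ[|s]] μ[|s][f | m]) :
    ∀ᵐ ω ∂μ, ω ∈ s → |ψ ω| ≤ c := by
  refine ae_imp_of_ae_cond hs ?_
  filter_upwards [hψ, ae_bdd_abs_condExp_of_ae_bdd_abs hf] with ω h1 h2
  rwa [h1]

theorem integral_eq_of_ae_eq_add {f f₀ g : Ω → ℝ} (hf : f =ᵐ[μ] f₀ + g) (hg : Integrable g μ)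
    (hg₀ : ∫ ω, g ω ∂μ = 0) : ∫ ω, f ω ∂μ = ∫ ω, f₀ ω ∂μ := by
  rw [integral_congr_ae hf]
  by_cases hf₀ : Integrable f₀ μ
  · rw [integral_add' hf₀ hg, hg₀, add_zero]
  · rw [integral_undef hf₀, integral_undef (f := f₀ + g) fun hfg => hf₀ <|
      (hfg.sub hg).congr (ae_of_all _ fun ω => add_sub_cancel_right (f₀ ω) (g ω))]

theorem integrable_indicator_mul [IsFiniteMeasure μ] (hs : MeasurableSet s) {φ f : Ω → ℝ}
    {c : ℝ} (hφ : AEStronglyMeasurable φ μ) (hφ_le : ∀ᵐ ω ∂μ, ω ∈ s → |φ ω| ≤ c)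
    (hf : Integrable f μ) : Integrable (fun ω => s.indicator φ ω * f ω) μ := by
  refine hf.bdd_mul (c := max c 0) (hφ.indicator hs) ?_
  filter_upwards [hφ_le] with ω h
  by_cases hω : ω ∈ s
  · rw [Set.indicator_of_mem hω]
    exact (h hω).trans (le_max_left _ _)
  · simp [hω]

theorem MeasureTheory.Integrable.cond {f : Ω → ℝ} (hf : Integrable f μ) (s : Set Ω) :
    Integrable f μ[|s] := by
  by_cases hs : μ s = 0
  · simp [cond_eq_zero_of_meas_eq_zero hs]
  · exact hf.restrict.smul_measure (ENNReal.inv_ne_top.2 hs)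

theorem setIntegral_eq_measureReal_mul_integral_cond [IsFiniteMeasure μ] (f : Ω → ℝ)
    (s : Set Ω) : ∫ ω in s, f ω ∂μ = μ.real s * ∫ ω, f ω ∂μ[|s] := by
  rw [ProbabilityTheory.cond, integral_smul_measure, smul_eq_mul, ← mul_assoc]
  by_cases hs : μ s = 0
  · simp [Measure.restrict_eq_zero.2 hs]
  · rw [measureReal_def, ← ENNReal.toReal_mul, ENNReal.mul_inv_cancel hs (measure_ne_top μ s),
      ENNReal.toReal_one, one_mul]

theorem integral_mul_sub_condExp_eq_zero [IsFiniteMeasure μ] (hm : m ≤ mΩ) {φ Y ψ : Ω → ℝ}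
    {c : ℝ} (hφ : StronglyMeasurable[m] φ) (hφ_le : ∀ᵐ ω ∂μ, |φ ω| ≤ c) (hY : Integrable Y μ)
    (hψ : ψ =ᵐ[μ] μ[Y | m]) : ∫ ω, φ ω * (Y ω - ψ ω) ∂μ = 0 := by
  have hφY : Integrable (fun ω => φ ω * Y ω) μ :=
    hY.bdd_mul (hφ.mono hm).aestronglyMeasurable hφ_le
  have hφψ : Integrable (fun ω => φ ω * ψ ω) μ :=
    (integrable_condExp.congr hψ.symm).bdd_mul (hφ.mono hm).aestronglyMeasurable hφ_le
  simp_rw [mul_sub]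
  rw [integral_sub hφY hφψ, sub_eq_zero, ← integral_condExp hm]
  refine integral_congr_ae ?_
  filter_upwards [condExp_mul_of_stronglyMeasurable_left hφ hφY hY, hψ] with ω h1 h2
  exact h1.trans (by rw [Pi.mul_apply, h2])

theorem integral_indicator_mul_sub_condExp_cond_eq_zero [IsFiniteMeasure μ]
    (hs : MeasurableSet s) (hm : m ≤ mΩ) {φ Y ψ : Ω → ℝ} {c : ℝ} (hφ : StronglyMeasurable[m] φ)
    (hφ_le : ∀ᵐ ω ∂μ, ω ∈ s → |φ ω| ≤ c) (hY : Integrable Y μ)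
    (hψ : ψ =ᵐ[μ[|s]] μ[|s][Y | m]) :
    ∫ ω, s.indicator φ ω * (Y ω - ψ ω) ∂μ = 0 := by
  simp_rw [← Set.indicator_mul_left s φ fun ω => Y ω - ψ ω]
  rw [integral_indicator hs, setIntegral_eq_measureReal_mul_integral_cond,
    integral_mul_sub_condExp_eq_zero hm hφ (c := c) ?_ (hY.cond s) hψ, mul_zero]
  filter_upwards [cond_absolutelyContinuous.ae_le hφ_le, ae_cond_mem hs] with ω h1 h2
  exact h1 h2

end ConditionalExpectation

section MissingAtRandom

variable {Ω β γ : Type*} [mΩ : MeasurableSpace Ω] [StandardBorelSpace Ω]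
  [mβ : MeasurableSpace β] [mγ : MeasurableSpace γ] {μ : Measure Ω} [IsFiniteMeasure μ]
  {W : Ω → β} {Z : Ω → γ} {R : Ω → ℝ}

theorem setIntegral_condExp_preimage_inter_of_condIndepFun (hW : Measurable W)
    (hZ : Measurable Z) (hR : Measurable R) (hR01 : ∀ ω, R ω = 0 ∨ R ω = 1)
    (hindep : CondIndepFun (mβ.comap W) hW.comap_le R Z μ) {a : Set β} (ha : MeasurableSet a)
    {b : Set γ} (hb : MeasurableSet b) :
    ∫ ω in W ⁻¹' a ∩ Z ⁻¹' b, μ[R | mβ.comap W] ω ∂μ = ∫ ω in W ⁻¹' a ∩ Z ⁻¹' b, R ω ∂μ := by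
  have hZb : MeasurableSet (Z ⁻¹' b) := hZ hb
  have hR_eq : R = (R ⁻¹' {1}).indicator fun _ => 1 := by
    ext ω; rcases hR01 ω with h | h <;> simp [h]
  have hR_ind : (Z ⁻¹' b).indicator R = (R ⁻¹' {1} ∩ Z ⁻¹' b).indicator fun _ => 1 := by
    ext ω; by_cases hω : ω ∈ Z ⁻¹' b <;> rcases hR01 ω with h | h <;> simp [hω, h]
  have hcondExp_ind : (Z ⁻¹' b).indicator (μ[R | mβ.comap W])
      = μ[R | mβ.comap W] * (Z ⁻¹' b).indicator fun _ => 1 := by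
    ext ω; by_cases hω : ω ∈ Z ⁻¹' b <;> simp [hω]
  -- both sides have conditional expectation `μ[R | σ(W)] * μ⟦Z ∈ b | σ(W)⟧`: the left one by
  -- conditional independence, the right one by pulling out the `σ(W)`-measurable factor
  have key : μ[(Z ⁻¹' b).indicator R | mβ.comap W]
      =ᵐ[μ] μ[(Z ⁻¹' b).indicator (μ[R | mβ.comap W]) | mβ.comap W] := by
    have hindep' := (condIndepFun_iff_condExp_inter_preimage_eq_mul hR hZ).mp hindep
      {1} b (measurableSet_singleton 1) hb
    have hpull := condExp_mul_of_stronglyMeasurable_left stronglyMeasurable_condExp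
      (hcondExp_ind ▸ integrable_condExp.indicator hZb) ((integrable_const (1 : ℝ)).indicator hZb)
    rw [hR_ind, hcondExp_ind]
    filter_upwards [hindep', hpull] with ω h1 h2
    rw [h1, h2, ← hR_eq, Pi.mul_apply]
  have hWa : MeasurableSet[mβ.comap W] (W ⁻¹' a) := ⟨a, ha, rfl⟩
  rw [← setIntegral_indicator hZb, ← setIntegral_indicator hZb,
    ← setIntegral_condExp hW.comap_le (integrable_condExp.indicator hZb) hWa,
    ← setIntegral_condExp hW.comap_le
      ((integrable_of_forall_eq_zero_or_eq_one hR hR01).indicator hZb) hWa]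
  exact setIntegral_congr_ae (hW ha) (key.mono fun ω h _ => h.symm)

theorem condExp_comap_prodMk_ae_eq_of_condIndepFun (hW : Measurable W) (hZ : Measurable Z)
    (hR : Measurable R) (hR01 : ∀ ω, R ω = 0 ∨ R ω = 1)
    (hindep : CondIndepFun (mβ.comap W) hW.comap_le R Z μ) :
    μ[R | (mβ.prod mγ).comap fun ω => (W ω, Z ω)] =ᵐ[μ] μ[R | mβ.comap W] := by
  have hV := (hW.prodMk hZ).comap_le
  have hRint := integrable_of_forall_eq_zero_or_eq_one (μ := μ) hR hR01
  have hgen : (mβ.prod mγ).comap (fun ω => (W ω, Z ω)) = MeasurableSpace.generateFrom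
      {s | ∃ t ∈ Set.image2 (· ×ˢ ·) {a : Set β | MeasurableSet a} {b : Set γ | MeasurableSet b},
        (fun ω => (W ω, Z ω)) ⁻¹' t = s} :=
    (congrArg (MeasurableSpace.comap _) generateFrom_prod.symm).trans
      MeasurableSpace.comap_generateFrom
  have hset : ∀ t, MeasurableSet[(mβ.prod mγ).comap fun ω => (W ω, Z ω)] t →
      ∫ ω in t, μ[R | mβ.comap W] ω ∂μ = ∫ ω in t, R ω ∂μ := by
    intro t ht
    induction t, ht using MeasurableSpace.induction_on_inter hgen (isPiSystem_prod.comap _) with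
    | empty => simp
    | basic t ht =>
      obtain ⟨_, ⟨a, ha, b, hb, rfl⟩, rfl⟩ := ht
      exact setIntegral_condExp_preimage_inter_of_condIndepFun hW hZ hR hR01 hindep ha hb
    | compl t ht ih =>
      rw [setIntegral_compl (hV _ ht) integrable_condExp, setIntegral_compl (hV _ ht) hRint, ih,
        integral_condExp hW.comap_le]
    | iUnion f hdisj hf ih =>
      rw [integral_iUnion (fun i => hV _ (hf i)) hdisj integrable_condExp.integrableOn,
        integral_iUnion (fun i => hV _ (hf i)) hdisj hRint.integrableOn]
      exact tsum_congr ih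
  have hWV : mβ.comap W ≤ (mβ.prod mγ).comap fun ω => (W ω, Z ω) := by
    rw [MeasurableSpace.comap_prodMk]
    exact le_sup_left
  exact (ae_eq_condExp_of_forall_setIntegral_eq hV hRint
    (fun _ _ _ => integrable_condExp.integrableOn) (fun t ht _ => hset t ht)
    (stronglyMeasurable_condExp.mono hWV).aestronglyMeasurable).symm

theorem integral_mul_sub_eq_zero_of_condIndepFun (hW : Measurable W) (hZ : Measurable Z)
    (hR : Measurable R) (hR01 : ∀ ω, R ω = 0 ∨ R ω = 1)
    (hindep : CondIndepFun (mβ.comap W) hW.comap_le R Z μ)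
    {η : Ω → ℝ} (hη : η =ᵐ[μ] μ[R | mβ.comap W]) {Φ : β × γ → ℝ} (hΦ : Measurable Φ)
    (hF : Integrable (fun ω => Φ (W ω, Z ω)) μ) :
    ∫ ω, Φ (W ω, Z ω) * (η ω - R ω) ∂μ = 0 := by
  have hFR : Integrable (fun ω => Φ (W ω, Z ω) * R ω) μ :=
    hF.mul_bdd (c := 1) hR.aestronglyMeasurable
      (ae_of_all _ fun ω => by rcases hR01 ω with h | h <;> simp [h])
  have hFη : Integrable (fun ω => Φ (W ω, Z ω) * η ω) μ :=
    hF.mul_bdd (c := 1) (integrable_condExp.1.congr hη.symm)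
      (ae_abs_le_one_of_ae_eq_condExp hR01 hη)
  -- `E[Φ R] = E[Φ E[R | W, Z]] = E[Φ E[R | W]]`
  have hpull : μ[(fun ω => Φ (W ω, Z ω) * R ω) | (mβ.prod mγ).comap fun ω => (W ω, Z ω)]
      =ᵐ[μ] fun ω => Φ (W ω, Z ω) * μ[R | (mβ.prod mγ).comap fun ω => (W ω, Z ω)] ω :=
    condExp_mul_of_stronglyMeasurable_left (hΦ.comp (comap_measurable _)).stronglyMeasurable
      hFR (integrable_of_forall_eq_zero_or_eq_one hR hR01)
  simp_rw [mul_sub]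
  rw [integral_sub hFη hFR, sub_eq_zero, eq_comm, ← integral_condExp (hW.prodMk hZ).comap_le]
  refine integral_congr_ae ?_
  filter_upwards [hpull, condExp_comap_prodMk_ae_eq_of_condIndepFun hW hZ hR hR01 hindep, hη]
    with ω h1 h2 h3
  rw [h2, ← h3] at h1
  exact h1

theorem ae_of_ae_imp_of_condIndepFun (hW : Measurable W) (hZ : Measurable Z)
    (hR : Measurable R) (hR01 : ∀ ω, R ω = 0 ∨ R ω = 1)
    (hindep : CondIndepFun (mβ.comap W) hW.comap_le R Z μ)
    {η : Ω → ℝ} (hη : η =ᵐ[μ] μ[R | mβ.comap W]) (hη_pos : ∀ᵐ ω ∂μ, 0 < η ω)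
    {Q : β × γ → Prop} (hQ : MeasurableSet {x | Q x}) (h : ∀ᵐ ω ∂μ, R ω = 1 → Q (W ω, Z ω)) :
    ∀ᵐ ω ∂μ, Q (W ω, Z ω) := by
  set Φ : β × γ → ℝ := {x | Q x}ᶜ.indicator fun _ => 1
  have hΦ : Measurable Φ := measurable_const.indicator hQ.compl
  have hΦ_le : ∀ x, |Φ x| ≤ 1 := fun x => by by_cases hx : Q x <;> simp [Φ, hx]
  have hF : Integrable (fun ω => Φ (W ω, Z ω)) μ :=
    .of_bound (hΦ.comp (hW.prodMk hZ)).aestronglyMeasurable 1 (ae_of_all _ fun ω => hΦ_le _)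
  have hFη : Integrable (fun ω => Φ (W ω, Z ω) * η ω) μ :=
    (integrable_condExp.congr hη.symm).bdd_mul (hΦ.comp (hW.prodMk hZ)).aestronglyMeasurable
      (ae_of_all _ fun ω => hΦ_le _)
  have hFR : (fun ω => Φ (W ω, Z ω) * R ω) =ᵐ[μ] 0 := by
    filter_upwards [h] with ω hω
    rcases hR01 ω with hR0 | hR1
    · simp [hR0]
    · simp [Φ, hω hR1]
  -- `∫ Φ η = ∫ Φ R = 0` with `Φ ≥ 0` and `η > 0` forces `Φ = 0` a.e.
  have hFη_zero : (fun ω => Φ (W ω, Z ω) * η ω) =ᵐ[μ] 0 := by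
    refine (integral_eq_zero_iff_of_nonneg_ae ?_ hFη).mp ?_
    · filter_upwards [hη_pos] with ω hω
      exact mul_nonneg (by by_cases hx : Q (W ω, Z ω) <;> simp [Φ, hx]) hω.le
    · rw [← integral_mul_sub_eq_zero_of_condIndepFun hW hZ hR hR01 hindep hη hΦ hF]
      refine integral_congr_ae ?_
      filter_upwards [hFR] with ω hω
      simp only [mul_sub, hω, Pi.zero_apply, sub_zero]
  filter_upwards [hFη_zero, hη_pos] with ω h0 hω
  by_contra hQω
  simp [Φ, hQω, hω.ne'] at h0

theorem integrable_of_ae_abs_le_of_condIndepFun (hW : Measurable W) (hZ : Measurable Z)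
    (hR : Measurable R) (hR01 : ∀ ω, R ω = 0 ∨ R ω = 1)
    (hindep : CondIndepFun (mβ.comap W) hW.comap_le R Z μ)
    {η : Ω → ℝ} (hη : η =ᵐ[μ] μ[R | mβ.comap W]) (hη_pos : ∀ᵐ ω ∂μ, 0 < η ω)
    {Φ Γ : β × γ → ℝ} (hΦ : Measurable Φ) (hΓ : Measurable Γ)
    (hΓ_int : Integrable (fun ω => Γ (W ω, Z ω)) μ)
    (h : ∀ᵐ ω ∂μ, R ω = 1 → |Φ (W ω, Z ω)| ≤ Γ (W ω, Z ω)) :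
    Integrable (fun ω => Φ (W ω, Z ω)) μ :=
  hΓ_int.mono' (hΦ.comp (hW.prodMk hZ)).aestronglyMeasurable
    (ae_of_ae_imp_of_condIndepFun hW hZ hR hR01 hindep hη hη_pos (Q := fun x => |Φ x| ≤ Γ x)
      (measurableSet_le hΦ.abs hΓ) h)

end MissingAtRandom

section MissingDataModel

variable {Ω : Type*} [mΩ : MeasurableSpace Ω] {μ : Measure Ω} [IsFiniteMeasure μ] {p q : ℕ}
  {Lstar : Ω → Fin p → ℝ} {L : Ω → Fin q → ℝ} {A R Y : Ω → ℝ}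

theorem integrable_and_integral_augmentation_eq_zero [StandardBorelSpace Ω]
    (hLstar : Measurable Lstar) (hL : Measurable L) (hA : Measurable A) (hR : Measurable R) (hY : Measurable Y) (hYint : Integrable Y μ)
    (hA01 : ∀ ω, A ω = 0 ∨ A ω = 1) (hR01 : ∀ ω, R ω = 0 ∨ R ω = 1)
    (hMAR : CondIndepFun (MeasurableSpace.comap (fun ω => (Lstar ω, A ω)) inferInstance)
      ((hLstar.prodMk hA).comap_le) R (fun ω => (L ω, Y ω)) μ)
    {η : (Fin p → ℝ) → ℝ → ℝ} (hη : Measurable (Function.uncurry η))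
    (hηver : (fun ω => η (Lstar ω) (A ω)) =ᵐ[μ]
      μ[R|MeasurableSpace.comap (fun ω => (Lstar ω, A ω)) inferInstance])
    {ε₀ : ℝ} (hε₀ : 0 < ε₀) (hηpos : ∀ᵐ ω ∂μ, ε₀ ≤ η (Lstar ω) 0 ∧ ε₀ ≤ η (Lstar ω) 1)
    {h₁ h₂ : (Fin p → ℝ) → ℝ → ℝ} (hh₁ : Measurable (Function.uncurry h₁))
    (hh₂ : Measurable (Function.uncurry h₂)) {a₁ b₁ a₂ b₂ : ℝ}
    (hh₁_le : ∀ᵐ ω ∂μ, A ω = 1 → R ω = 1 → |h₁ (Lstar ω) (Y ω)| ≤ a₁ * |Y ω| + b₁)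
    (hh₂_le : ∀ᵐ ω ∂μ, A ω = 0 → R ω = 1 → |h₂ (Lstar ω) (Y ω)| ≤ a₂ * |Y ω| + b₂) :
    Integrable (fun ω => (A ω * h₁ (Lstar ω) (Y ω) - (1 - A ω) * h₂ (Lstar ω) (Y ω))
      / η (Lstar ω) 1 * (η (Lstar ω) (A ω) - R ω)) μ ∧
    ∫ ω, (A ω * h₁ (Lstar ω) (Y ω) - (1 - A ω) * h₂ (Lstar ω) (Y ω))
      / η (Lstar ω) 1 * (η (Lstar ω) (A ω) - R ω) ∂μ = 0 := by
  have hηA : ∀ᵐ ω ∂μ, 0 < η (Lstar ω) (A ω) := by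
    filter_upwards [hηpos] with ω h
    rcases hA01 ω with hA | hA <;> rw [hA] <;> linarith [h.1, h.2]
  have hF : Integrable (fun ω => (A ω * h₁ (Lstar ω) (Y ω) - (1 - A ω) * h₂ (Lstar ω) (Y ω))
      / η (Lstar ω) 1) μ := by
    refine integrable_of_ae_abs_le_of_condIndepFun (hLstar.prodMk hA) (hL.prodMk hY) hR hR01
      hMAR hηver hηA (Φ := fun x => (x.1.2 * h₁ x.1.1 x.2.2 - (1 - x.1.2) * h₂ x.1.1 x.2.2)
        / η x.1.1 1) (Γ := fun x => max (a₁ * |x.2.2| + b₁) (a₂ * |x.2.2| + b₂) / ε₀)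
      (by fun_prop) (by fun_prop)
      ((((hYint.abs.const_mul a₁).add (integrable_const b₁)).sup
        ((hYint.abs.const_mul a₂).add (integrable_const b₂))).div_const ε₀) ?_
    filter_upwards [hh₁_le, hh₂_le, hηpos] with ω h₁_le h₂_le hη hR1
    refine abs_div_le_div_of_le ?_ hε₀ hη.2
    rcases hA01 ω with hA | hA
    · simpa [hA] using (h₂_le hA hR1).trans (le_max_right _ _)
    · simpa [hA] using (h₁_le hA hR1).trans (le_max_left _ _)
  exact ⟨integrable_mul_sub_of_ae_eq_condExp hF hR hR01 hηver,
    integral_mul_sub_eq_zero_of_condIndepFun (Φ := fun x => (x.1.2 * h₁ x.1.1 x.2.2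
      - (1 - x.1.2) * h₂ x.1.1 x.2.2) / η x.1.1 1) (hLstar.prodMk hA) (hL.prodMk hY) hR hR01
      hMAR hηver (by fun_prop) hF⟩

theorem integrable_and_integral_outcome_term_eq_zero (hLstar : Measurable Lstar) (hL : Measurable L)
    (hA : Measurable A) (hR : Measurable R) (hY : Integrable Y μ)
    {φ : (Fin p → ℝ) → (Fin q → ℝ) → ℝ} (hφ : Measurable (Function.uncurry φ)) {c : ℝ}
    (hφ_le : ∀ᵐ ω ∂μ, A ω = 0 → R ω = 1 → |φ (Lstar ω) (L ω)| ≤ c)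
    {μ₀ : (Fin p → ℝ) → (Fin q → ℝ) → ℝ} (hμ₀ : Measurable (Function.uncurry μ₀)) {C : ℝ}
    (hC : ∀ x y, |μ₀ x y| ≤ C)
    (hμ₀ver : (fun ω => μ₀ (Lstar ω) (L ω)) =ᵐ[μ[|{ω | A ω = 0 ∧ R ω = 1}]]
      (μ[|{ω | A ω = 0 ∧ R ω = 1}])[Y|MeasurableSpace.comap
          (fun ω => (Lstar ω, L ω)) inferInstance]) :
    Integrable (fun ω => {ω | A ω = 0 ∧ R ω = 1}.indicator (fun ω => φ (Lstar ω) (L ω)) ω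
      * (Y ω - μ₀ (Lstar ω) (L ω))) μ ∧
    ∫ ω, {ω | A ω = 0 ∧ R ω = 1}.indicator (fun ω => φ (Lstar ω) (L ω)) ω
      * (Y ω - μ₀ (Lstar ω) (L ω)) ∂μ = 0 := by
  have hs : MeasurableSet {ω | A ω = 0 ∧ R ω = 1} :=
    (hA (measurableSet_singleton 0)).inter (hR (measurableSet_singleton 1))
  have hφ_le' : ∀ᵐ ω ∂μ, ω ∈ {ω | A ω = 0 ∧ R ω = 1} → |φ (Lstar ω) (L ω)| ≤ c :=
    hφ_le.mono fun ω h hω => h hω.1 hω.2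
  exact ⟨integrable_indicator_mul hs (by fun_prop : Measurable _).aestronglyMeasurable hφ_le'
      (hY.sub (.of_bound (by fun_prop : Measurable _).aestronglyMeasurable C
        (ae_of_all _ fun ω => hC (Lstar ω) (L ω)))),
    integral_indicator_mul_sub_condExp_cond_eq_zero hs (hLstar.prodMk hL).comap_le
      (hφ.comp (comap_measurable _)).stronglyMeasurable hφ_le' hY hμ₀ver⟩

end MissingDataModel

theorem stmt_16_general
    {Ω : Type*} [𝓕 : MeasurableSpace Ω] [StandardBorelSpace Ω]
    (μ : Measure Ω) [IsProbabilityMeasure μ]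
    {p q : ℕ}
    (Lstar : Ω → Fin p → ℝ) (L : Ω → Fin q → ℝ) (A R Y : Ω → ℝ)
    (hLstar : Measurable Lstar) (hL : Measurable L)
    (hA : Measurable A) (hR : Measurable R) (hY : Measurable Y)
    (hA01 : ∀ ω, A ω = 0 ∨ A ω = 1) (hR01 : ∀ ω, R ω = 0 ∨ R ω = 1)
    (hY2 : MemLp Y 2 μ)
    (g : (Fin q → ℝ) → ℝ → ℝ) (hg : Measurable (Function.uncurry g))
    (hg01 : ∀ x a, g x a = 0 ∨ g x a = 1)
    -- Assumption A4 (MAR): R ⫫ (L, Y) | σ(L*, A)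
    (hMAR : CondIndepFun (MeasurableSpace.comap (fun ω => (Lstar ω, A ω)) inferInstance)
      ((hLstar.prodMk hA).comap_le) R (fun ω => (L ω, Y ω)) μ)
    -- Assumption A5 (missingness positivity)
    (η : (Fin p → ℝ) → ℝ → ℝ) (hη : Measurable (Function.uncurry η))
    (hηver : (fun ω => η (Lstar ω) (A ω)) =ᵐ[μ]
      μ[R|MeasurableSpace.comap (fun ω => (Lstar ω, A ω)) inferInstance])
    (ε₀ : ℝ) (hε₀ : 0 < ε₀)
    (hηpos : ∀ᵐ ω ∂μ, ε₀ ≤ η (Lstar ω) 0 ∧ ε₀ ≤ η (Lstar ω) 1)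
    -- bounded complete-case outcome regression among the untreated
    (μ₀ : (Fin p → ℝ) → (Fin q → ℝ) → ℝ) (hμ₀ : Measurable (Function.uncurry μ₀))
    (hμ₀bd : ∃ C, ∀ x y, |μ₀ x y| ≤ C)
    (hμ₀ver : (fun ω => μ₀ (Lstar ω) (L ω)) =ᵐ[μ[|{ω | A ω = 0 ∧ R ω = 1}]]
      (μ[|{ω | A ω = 0 ∧ R ω = 1}])[Y|MeasurableSpace.comap
          (fun ω => (Lstar ω, L ω)) inferInstance])
    -- complete-case treatment propensity
    (u : (Fin p → ℝ) → (Fin q → ℝ) → ℝ) (hu : Measurable (Function.uncurry u))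
    (δ : ℝ) (hδ : 0 < δ)
    (hubd : ∀ᵐ ω ∂(μ[|{ω | R ω = 1}]),
      δ ≤ u (Lstar ω) (L ω) ∧ u (Lstar ω) (L ω) ≤ 1 - δ)
    -- nested nuisances among treated complete cases
    (ε₁f ξ : (Fin p → ℝ) → ℝ → ℝ)
    (hε₁f : Measurable (Function.uncurry ε₁f)) (hξ : Measurable (Function.uncurry ξ))
    (hε₁ver : (fun ω => ε₁f (Lstar ω) (Y ω)) =ᵐ[μ[|{ω | A ω = 1 ∧ R ω = 1}]]
      (μ[|{ω | A ω = 1 ∧ R ω = 1}])[(fun ω => g (L ω) (A ω))|MeasurableSpace.comap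
          (fun ω => (Lstar ω, Y ω)) inferInstance])
    (hξver : (fun ω => ξ (Lstar ω) (Y ω)) =ᵐ[μ[|{ω | A ω = 1 ∧ R ω = 1}]]
      (μ[|{ω | A ω = 1 ∧ R ω = 1}])[(fun ω => g (L ω) (A ω) * μ₀ (Lstar ω) (L ω))|
        MeasurableSpace.comap (fun ω => (Lstar ω, Y ω)) inferInstance])
    -- nested nuisances among untreated complete cases
    (γ χ : (Fin p → ℝ) → ℝ → ℝ)
    (hγ : Measurable (Function.uncurry γ)) (hχ : Measurable (Function.uncurry χ))
    (hγver : (fun ω => γ (Lstar ω) (Y ω)) =ᵐ[μ[|{ω | A ω = 0 ∧ R ω = 1}]]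
      (μ[|{ω | A ω = 0 ∧ R ω = 1}])[(fun ω => g (L ω) (A ω)
          * (u (Lstar ω) (L ω) / (1 - u (Lstar ω) (L ω))))|
        MeasurableSpace.comap (fun ω => (Lstar ω, Y ω)) inferInstance])
    (hχver : (fun ω => χ (Lstar ω) (Y ω)) =ᵐ[μ[|{ω | A ω = 0 ∧ R ω = 1}]]
      (μ[|{ω | A ω = 0 ∧ R ω = 1}])[(fun ω => g (L ω) (A ω)
          * (u (Lstar ω) (L ω) / (1 - u (Lstar ω) (L ω))) * μ₀ (Lstar ω) (L ω))|
        MeasurableSpace.comap (fun ω => (Lstar ω, Y ω)) inferInstance]) :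
    ∫ ω, (A ω * R ω / η (Lstar ω) 1)
          * ((g (L ω) (A ω) - ε₁f (Lstar ω) (Y ω)) * Y ω
              - (g (L ω) (A ω) * μ₀ (Lstar ω) (L ω) - ξ (Lstar ω) (Y ω)))
        + A ω * (ε₁f (Lstar ω) (Y ω) * Y ω - ξ (Lstar ω) (Y ω))
        - ((1 - A ω) * R ω / η (Lstar ω) 1)
          * (g (L ω) (A ω) * (u (Lstar ω) (L ω) / (1 - u (Lstar ω) (L ω)))
                * (Y ω - μ₀ (Lstar ω) (L ω))
              - (γ (Lstar ω) (Y ω) * Y ω - χ (Lstar ω) (Y ω)))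
        - (1 - A ω) * (η (Lstar ω) 0 / η (Lstar ω) 1)
          * (γ (Lstar ω) (Y ω) * Y ω - χ (Lstar ω) (Y ω)) ∂μ
    = ∫ ω, (A ω * R ω * g (L ω) (A ω) / η (Lstar ω) 1) * (Y ω - μ₀ (Lstar ω) (L ω)) ∂μ := by
  obtain ⟨C, hC⟩ := hμ₀bd
  have hYint : Integrable Y μ := hY2.integrable one_le_two
  have hE : ∀ ω, |g (L ω) (A ω)| ≤ 1 := fun ω => by
    rcases hg01 (L ω) (A ω) with h | h <;> simp [h]
  have hEw : ∀ᵐ ω ∂μ, R ω = 1 →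
      |g (L ω) (A ω) * (u (Lstar ω) (L ω) / (1 - u (Lstar ω) (L ω)))| ≤ δ⁻¹ :=
    (ae_imp_of_ae_cond (hR (measurableSet_singleton 1)) hubd).mono fun ω h hR1 =>
      (abs_mul_le_of_le (hE ω) (abs_div_one_sub_le_inv hδ (hδ.le.trans (h hR1).1)
        (h hR1).2)).trans_eq (one_mul _)
  have hs₁ : MeasurableSet {ω | A ω = 1 ∧ R ω = 1} :=
    (hA (measurableSet_singleton 1)).inter (hR (measurableSet_singleton 1))
  have hs₀ : MeasurableSet {ω | A ω = 0 ∧ R ω = 1} :=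
    (hA (measurableSet_singleton 0)).inter (hR (measurableSet_singleton 1))
  have hEw₀ : ∀ᵐ ω ∂μ[|{ω | A ω = 0 ∧ R ω = 1}],
      |g (L ω) (A ω) * (u (Lstar ω) (L ω) / (1 - u (Lstar ω) (L ω)))| ≤ δ⁻¹ := by
    filter_upwards [cond_absolutelyContinuous.ae_le hEw, ae_cond_mem hs₀] with ω h hω
    exact h hω.2
  have hε₁_le := ae_abs_le_of_ae_eq_condExp_cond hs₁ (ae_of_all _ hE) hε₁ver
  have hξ_le := ae_abs_le_of_ae_eq_condExp_cond hs₁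
    (ae_of_all _ fun ω => abs_mul_le_of_le (hE ω) (hC _ _)) hξver
  have hγ_le := ae_abs_le_of_ae_eq_condExp_cond hs₀ hEw₀ hγver
  have hχ_le := ae_abs_le_of_ae_eq_condExp_cond hs₀
    (hEw₀.mono fun ω h => abs_mul_le_of_le h (hC _ _)) hχver
  obtain ⟨hG, hG₀⟩ := integrable_and_integral_augmentation_eq_zero hLstar hL hA hR hY hYint hA01 hR01 hMAR hη
    hηver hε₀ hηpos (h₁ := fun x y => ε₁f x y * y - ξ x y) (h₂ := fun x y => γ x y * y - χ x y)
    (by fun_prop) (by fun_prop)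
    (by filter_upwards [hε₁_le, hξ_le] with ω h₁ h₂ hA hR1 using
      abs_mul_sub_le (h₁ ⟨hA, hR1⟩) (h₂ ⟨hA, hR1⟩))
    (by filter_upwards [hγ_le, hχ_le] with ω h₁ h₂ hA hR1 using
      abs_mul_sub_le (h₁ ⟨hA, hR1⟩) (h₂ ⟨hA, hR1⟩))
  obtain ⟨hT, hT₀⟩ := integrable_and_integral_outcome_term_eq_zero hLstar hL hA hR hYint
    (φ := fun x y => g y 0 * (u x y / (1 - u x y)) / η x 1) (by fun_prop)
    (by filter_upwards [hηpos, hEw] with ω hη h hA hR1 using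
      abs_div_le_div_of_le (hA ▸ h hR1) hε₀ hη.2) hμ₀ hC hμ₀ver
  refine integral_eq_of_ae_eq_add ?_ (hG.sub hT) (by rw [integral_sub' hG hT, hG₀, hT₀, sub_zero])
  filter_upwards [hηpos] with ω h
  have hne : η (Lstar ω) 1 ≠ 0 := (hε₀.trans_le h.2).ne'
  rcases hA01 ω with hA | hA <;> rcases hR01 ω with hR | hR <;> simp [hA, hR] <;> field_simp <;>
    ring

/-- **The efficient influence function of β is centered at β(P).** -/
theorem stmt_16
    {Ω : Type*} [𝓕 : MeasurableSpace Ω] [StandardBorelSpace Ω] [Nonempty Ω]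
    (μ : Measure Ω) [IsProbabilityMeasure μ]
    {p q : ℕ}
    (Lstar : Ω → Fin p → ℝ) (L : Ω → Fin q → ℝ) (A R Y : Ω → ℝ)
    (hLstar : Measurable Lstar) (hL : Measurable L)
    (hA : Measurable A) (hR : Measurable R) (hY : Measurable Y)
    (hA01 : ∀ ω, A ω = 0 ∨ A ω = 1) (hR01 : ∀ ω, R ω = 0 ∨ R ω = 1)
    (hY2 : MemLp Y 2 μ)
    (g : (Fin q → ℝ) → ℝ → ℝ) (hg : Measurable (Function.uncurry g))
    (hg01 : ∀ x a, g x a = 0 ∨ g x a = 1)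
    -- Assumption A4 (MAR): R ⫫ (L, Y) | σ(L*, A)
    (hMAR : CondIndepFun (MeasurableSpace.comap (fun ω => (Lstar ω, A ω)) inferInstance)
      ((hLstar.prodMk hA).comap_le) R (fun ω => (L ω, Y ω)) μ)
    -- Assumption A5 (missingness positivity)
    (η : (Fin p → ℝ) → ℝ → ℝ) (hη : Measurable (Function.uncurry η))
    (hηver : (fun ω => η (Lstar ω) (A ω)) =ᵐ[μ]
      μ[R|MeasurableSpace.comap (fun ω => (Lstar ω, A ω)) inferInstance])
    (ε₀ : ℝ) (hε₀ : 0 < ε₀)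
    (hηpos : ∀ᵐ ω ∂μ, ε₀ ≤ η (Lstar ω) 0 ∧ ε₀ ≤ η (Lstar ω) 1)
    (hA1R : 0 < μ {ω | A ω = 1 ∧ R ω = 1})
    (hA0R : 0 < μ {ω | A ω = 0 ∧ R ω = 1})
    (hRpos : 0 < μ {ω | R ω = 1})
    -- bounded complete-case outcome regression among the untreated
    (μ₀ : (Fin p → ℝ) → (Fin q → ℝ) → ℝ) (hμ₀ : Measurable (Function.uncurry μ₀))
    (hμ₀bd : ∃ C, ∀ x y, |μ₀ x y| ≤ C)
    (hμ₀ver : (fun ω => μ₀ (Lstar ω) (L ω)) =ᵐ[μ[|{ω | A ω = 0 ∧ R ω = 1}]]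
      (μ[|{ω | A ω = 0 ∧ R ω = 1}])[Y|MeasurableSpace.comap
          (fun ω => (Lstar ω, L ω)) inferInstance])
    -- complete-case treatment propensity
    (u : (Fin p → ℝ) → (Fin q → ℝ) → ℝ) (hu : Measurable (Function.uncurry u))
    (huver : (fun ω => u (Lstar ω) (L ω)) =ᵐ[μ[|{ω | R ω = 1}]]
      (μ[|{ω | R ω = 1}])[A|MeasurableSpace.comap (fun ω => (Lstar ω, L ω)) inferInstance])
    (δ : ℝ) (hδ : 0 < δ)
    (hubd : ∀ᵐ ω ∂(μ[|{ω | R ω = 1}]),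
      δ ≤ u (Lstar ω) (L ω) ∧ u (Lstar ω) (L ω) ≤ 1 - δ)
    -- nested nuisances among treated complete cases
    (ε₁f ξ : (Fin p → ℝ) → ℝ → ℝ)
    (hε₁f : Measurable (Function.uncurry ε₁f)) (hξ : Measurable (Function.uncurry ξ))
    (hε₁ver : (fun ω => ε₁f (Lstar ω) (Y ω)) =ᵐ[μ[|{ω | A ω = 1 ∧ R ω = 1}]]
      (μ[|{ω | A ω = 1 ∧ R ω = 1}])[(fun ω => g (L ω) (A ω))|MeasurableSpace.comap
          (fun ω => (Lstar ω, Y ω)) inferInstance])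
    (hξver : (fun ω => ξ (Lstar ω) (Y ω)) =ᵐ[μ[|{ω | A ω = 1 ∧ R ω = 1}]]
      (μ[|{ω | A ω = 1 ∧ R ω = 1}])[(fun ω => g (L ω) (A ω) * μ₀ (Lstar ω) (L ω))|
        MeasurableSpace.comap (fun ω => (Lstar ω, Y ω)) inferInstance])
    -- nested nuisances among untreated complete cases
    (γ χ : (Fin p → ℝ) → ℝ → ℝ)
    (hγ : Measurable (Function.uncurry γ)) (hχ : Measurable (Function.uncurry χ))
    (hγver : (fun ω => γ (Lstar ω) (Y ω)) =ᵐ[μ[|{ω | A ω = 0 ∧ R ω = 1}]]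
      (μ[|{ω | A ω = 0 ∧ R ω = 1}])[(fun ω => g (L ω) (A ω)
          * (u (Lstar ω) (L ω) / (1 - u (Lstar ω) (L ω))))|
        MeasurableSpace.comap (fun ω => (Lstar ω, Y ω)) inferInstance])
    (hχver : (fun ω => χ (Lstar ω) (Y ω)) =ᵐ[μ[|{ω | A ω = 0 ∧ R ω = 1}]]
      (μ[|{ω | A ω = 0 ∧ R ω = 1}])[(fun ω => g (L ω) (A ω)
          * (u (Lstar ω) (L ω) / (1 - u (Lstar ω) (L ω))) * μ₀ (Lstar ω) (L ω))|
        MeasurableSpace.comap (fun ω => (Lstar ω, Y ω)) inferInstance]) :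
    ∫ ω, (A ω * R ω / η (Lstar ω) 1)
          * ((g (L ω) (A ω) - ε₁f (Lstar ω) (Y ω)) * Y ω
              - (g (L ω) (A ω) * μ₀ (Lstar ω) (L ω) - ξ (Lstar ω) (Y ω)))
        + A ω * (ε₁f (Lstar ω) (Y ω) * Y ω - ξ (Lstar ω) (Y ω))
        - ((1 - A ω) * R ω / η (Lstar ω) 1)
          * (g (L ω) (A ω) * (u (Lstar ω) (L ω) / (1 - u (Lstar ω) (L ω)))
                * (Y ω - μ₀ (Lstar ω) (L ω))
              - (γ (Lstar ω) (Y ω) * Y ω - χ (Lstar ω) (Y ω)))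
        - (1 - A ω) * (η (Lstar ω) 0 / η (Lstar ω) 1)
          * (γ (Lstar ω) (Y ω) * Y ω - χ (Lstar ω) (Y ω)) ∂μ
    = ∫ ω, (A ω * R ω * g (L ω) (A ω) / η (Lstar ω) 1) * (Y ω - μ₀ (Lstar ω) (L ω)) ∂μ :=
  stmt_16_general (𝓕 := 𝓕) μ Lstar L A R Y hLstar hL hA hR hY hA01 hR01 hY2 g hg hg01 hMAR η hη
    hηver ε₀ hε₀ hηpos μ₀ hμ₀ hμ₀bd hμ₀ver u hu δ hδ hubd ε₁f ξ hε₁f hξ hε₁ver hξver γ χ hγ hχ hγver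
    hχver
end

section
/- (Corollary 3.1, Cauchy–Schwarz bound on the α-remainder.) Let (Ω, 𝓕, μ) be a probability space, L* : Ω → ℝ^p and Y : Ω → ℝ measurable, and A : Ω → {0,1} measurable. Let ε̄₁, ε₁ : ℝ^p × ℝ → ℝ and η̄₁, η₁ : ℝ^p → ℝ be measurable with η̄₁ ≥ ε everywhere for some ε > 0, and suppose (ε̄₁ − ε₁)(L*, Y) and (η̄₁ − η₁)(L*) belong to L²(μ). Then |E[A·(ε̄₁(L*, Y) − ε₁(L*, Y))·(1 − η₁(L*)/η̄₁(L*))]| ≤ ε⁻¹ · ‖(ε̄₁ − ε₁)(L*, Y)‖_{L²(μ)} · ‖(η̄₁ − η₁)(L*)‖_{L²(μ)}. In particular, the von Mises remainder R_α(P̄, P) is O(‖ε̄₁ − ε₁‖ · ‖η̄₁ − η₁‖). -/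
/-!
Writing `1 - η₁/η̄₁ = (η̄₁ - η₁)/η̄₁` and using `|A| ≤ 1`, `η̄₁ ≥ ε`, the integrand is dominated
pointwise by `ε⁻¹ |(ε̄₁ - ε₁)(η̄₁ - η₁)|`, whose integral is bounded by Cauchy–Schwarz
(Hölder with exponents `2, 2`).
-/

open MeasureTheory

theorem integral_abs_mul_le_sqrt_mul_sqrt {Ω : Type*} [MeasurableSpace Ω] {μ : Measure Ω}
    {f g : Ω → ℝ} (hf : MemLp f 2 μ) (hg : MemLp g 2 μ) :
    ∫ ω, |f ω * g ω| ∂μ ≤ √(∫ ω, f ω ^ 2 ∂μ) * √(∫ ω, g ω ^ 2 ∂μ) := by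
  have holder := integral_mul_le_Lp_mul_Lq_of_nonneg Real.HolderConjugate.two_two
    (Filter.Eventually.of_forall fun ω => abs_nonneg (f ω))
    (Filter.Eventually.of_forall fun ω => abs_nonneg (g ω))
    (by simpa using hf.norm) (by simpa using hg.norm)
  simpa only [abs_mul, Real.sqrt_eq_rpow, Real.rpow_two, sq_abs] using holder

theorem abs_mul_mul_one_sub_div_le {a x b c ε : ℝ} (ha : |a| ≤ 1) (hε : 0 < ε) (hb : ε ≤ b) :
    |a * x * (1 - c / b)| ≤ ε⁻¹ * |x * (b - c)| := by
  have hb₀ : 0 < b := hε.trans_le hb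
  have hsub : 1 - c / b = (b - c) * b⁻¹ := by field_simp
  rw [hsub, abs_mul, abs_mul, abs_mul, abs_inv, abs_of_pos hb₀]
  calc |a| * |x| * (|b - c| * b⁻¹) ≤ 1 * |x| * (|b - c| * ε⁻¹) := by
        gcongr
    _ = ε⁻¹ * |x * (b - c)| := by rw [abs_mul]; ring

theorem stmt_17_general
    {Ω : Type*} [𝓕 : MeasurableSpace Ω] (μ : Measure Ω)
    {p : ℕ} (Lstar : Ω → Fin p → ℝ) (Y A : Ω → ℝ)
    (hA01 : ∀ ω, A ω = 0 ∨ A ω = 1)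
    (εbar₁ ε₁ : (Fin p → ℝ) → ℝ → ℝ) (ηbar₁ η₁ : (Fin p → ℝ) → ℝ)
    (ε : ℝ) (hε : 0 < ε) (hηbar₁lb : ∀ x, ε ≤ ηbar₁ x)
    (hεL2 : MemLp (fun ω => εbar₁ (Lstar ω) (Y ω) - ε₁ (Lstar ω) (Y ω)) 2 μ)
    (hηL2 : MemLp (fun ω => ηbar₁ (Lstar ω) - η₁ (Lstar ω)) 2 μ) :
    |∫ ω, A ω * (εbar₁ (Lstar ω) (Y ω) - ε₁ (Lstar ω) (Y ω))
        * (1 - η₁ (Lstar ω) / ηbar₁ (Lstar ω)) ∂μ|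
      ≤ ε⁻¹ * Real.sqrt (∫ ω, (εbar₁ (Lstar ω) (Y ω) - ε₁ (Lstar ω) (Y ω)) ^ 2 ∂μ)
          * Real.sqrt (∫ ω, (ηbar₁ (Lstar ω) - η₁ (Lstar ω)) ^ 2 ∂μ) := by
  have hA : ∀ ω, |A ω| ≤ 1 := fun ω => by rcases hA01 ω with h | h <;> simp [h]
  rw [← Real.norm_eq_abs]
  calc _ ≤ ∫ ω, ε⁻¹ * |(εbar₁ (Lstar ω) (Y ω) - ε₁ (Lstar ω) (Y ω))
          * (ηbar₁ (Lstar ω) - η₁ (Lstar ω))| ∂μ :=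
        norm_integral_le_of_norm_le ((hεL2.integrable_mul hηL2).abs.const_mul _)
          (Filter.Eventually.of_forall fun ω =>
            abs_mul_mul_one_sub_div_le (hA ω) hε (hηbar₁lb _))
    _ = ε⁻¹ * ∫ ω, |(εbar₁ (Lstar ω) (Y ω) - ε₁ (Lstar ω) (Y ω))
          * (ηbar₁ (Lstar ω) - η₁ (Lstar ω))| ∂μ := integral_const_mul _ _
    _ ≤ _ := (mul_le_mul_of_nonneg_left (integral_abs_mul_le_sqrt_mul_sqrt hεL2 hηL2)
          (inv_nonneg.2 hε.le)).trans_eq (mul_assoc _ _ _).symm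

/-- **Corollary 3.1 (Cauchy–Schwarz bound on the α-remainder).**
`|R_α(P̄, P)| ≤ ε⁻¹ ‖ε̄₁ − ε₁‖_{L²} ‖η̄₁ − η₁‖_{L²}`. -/
theorem stmt_17
    {Ω : Type*} [𝓕 : MeasurableSpace Ω] (μ : Measure Ω) [IsProbabilityMeasure μ]
    {p : ℕ} (Lstar : Ω → Fin p → ℝ) (Y A : Ω → ℝ)
    (hLstar : Measurable Lstar) (hY : Measurable Y) (hA : Measurable A)
    (hA01 : ∀ ω, A ω = 0 ∨ A ω = 1)
    (εbar₁ ε₁ : (Fin p → ℝ) → ℝ → ℝ) (ηbar₁ η₁ : (Fin p → ℝ) → ℝ)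
    (hεbar₁ : Measurable (Function.uncurry εbar₁)) (hε₁ : Measurable (Function.uncurry ε₁))
    (hηbar₁ : Measurable ηbar₁) (hη₁ : Measurable η₁)
    (ε : ℝ) (hε : 0 < ε) (hηbar₁lb : ∀ x, ε ≤ ηbar₁ x)
    (hεL2 : MemLp (fun ω => εbar₁ (Lstar ω) (Y ω) - ε₁ (Lstar ω) (Y ω)) 2 μ)
    (hηL2 : MemLp (fun ω => ηbar₁ (Lstar ω) - η₁ (Lstar ω)) 2 μ) :
    |∫ ω, A ω * (εbar₁ (Lstar ω) (Y ω) - ε₁ (Lstar ω) (Y ω))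
        * (1 - η₁ (Lstar ω) / ηbar₁ (Lstar ω)) ∂μ|
      ≤ ε⁻¹ * Real.sqrt (∫ ω, (εbar₁ (Lstar ω) (Y ω) - ε₁ (Lstar ω) (Y ω)) ^ 2 ∂μ)
          * Real.sqrt (∫ ω, (ηbar₁ (Lstar ω) - η₁ (Lstar ω)) ^ 2 ∂μ) :=
  stmt_17_general (𝓕 := 𝓕) μ Lstar Y A hA01 εbar₁ ε₁ ηbar₁ η₁ ε hε hηbar₁lb hεL2 hηL2
end
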